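/- arXiv:2305.15553 — 4 statements merged into one kernel-verified Lean document; each statement's English description precedes it below -/
import Mathlib

section
/- Let C⊆ℝⁿ be closed, K≥0, and let x_j:[0,1]→ℝⁿ be continuous functions converging uniformly on [0,1] to x̃. Let ξ_j∈L^∞([0,1];ℝ) satisfy 0≤ξ_j(s)≤K for a.e. s and ξ_j(s)=0 for a.e. s such that x_j(s) lies in the interior of C. Assume ξ_j converges to ξ̃ in the weak* topology of L^∞([0,1];ℝ), i.e. ∫₀¹ ξ_j h → ∫₀¹ ξ̃ h for every h∈L¹([0,1];ℝ). Then ξ̃(t)=0 for a.e. t in the set {t∈[0,1] : x̃(t)∈ interior of C}. -/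
open MeasureTheory Set Filter

/-- Let `C ⊆ ℝⁿ` be closed, `x_j → x̃` uniformly on `[0,1]`, and let
`ξ_j ∈ L^∞([0,1];ℝ)` with `0 ≤ ξ_j ≤ K` a.e. and `ξ_j = 0` a.e. on `{s : x_j(s) ∈ int C}`.
If `ξ_j → ξ̃` weakly* in `L^∞` (tested against every `h ∈ L¹([0,1])`), then `ξ̃(t) = 0`
for a.e. `t` with `x̃(t) ∈ int C`. -/
theorem stmt1 {n : ℕ} (C : Set (EuclideanSpace ℝ (Fin n))) (hC : IsClosed C)
    (K : ℝ) (hK : 0 ≤ K)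
    (x : ℕ → ℝ → EuclideanSpace ℝ (Fin n)) (xlim : ℝ → EuclideanSpace ℝ (Fin n))
    (hxcont : ∀ j, ContinuousOn (x j) (Icc (0:ℝ) 1))
    (hxunif : TendstoUniformlyOn x xlim atTop (Icc (0:ℝ) 1))
    (ξ : ℕ → ℝ → ℝ) (hξmeas : ∀ j, Measurable (ξ j))
    (hξbdd : ∀ j, ∀ᵐ s ∂(volume.restrict (Icc (0:ℝ) 1)), 0 ≤ ξ j s ∧ ξ j s ≤ K)
    (hξsupp : ∀ j, ∀ᵐ s ∂(volume.restrict (Icc (0:ℝ) 1)),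
      x j s ∈ interior C → ξ j s = 0)
    (ξlim : ℝ → ℝ) (hξlimmeas : Measurable ξlim)
    (hweak : ∀ h : ℝ → ℝ, IntegrableOn h (Icc (0:ℝ) 1) →
      Tendsto (fun j => ∫ s in Icc (0:ℝ) 1, ξ j s * h s) atTop
        (nhds (∫ s in Icc (0:ℝ) 1, ξlim s * h s))) :
    ∀ᵐ t ∂(volume.restrict (Icc (0:ℝ) 1)), xlim t ∈ interior C → ξlim t = 0 := by
  set μ : Measure ℝ := volume.restrict (Icc (0:ℝ) 1) with hμ
  haveI hfin : IsFiniteMeasure μ := by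
    constructor
    rw [hμ, Measure.restrict_apply_univ]
    exact measure_Icc_lt_top
  -- Step 1: weak convergence of set integrals
  have key : ∀ A : Set ℝ, MeasurableSet A →
      Tendsto (fun j => ∫ s in A, ξ j s ∂μ) atTop (nhds (∫ s in A, ξlim s ∂μ)) := by
    intro A hA
    have hint : IntegrableOn (A.indicator (fun _ => (1:ℝ))) (Icc (0:ℝ) 1) :=
      (integrable_const (1:ℝ)).indicator hA
    have h2 := hweak _ hint
    have heq : ∀ g : ℝ → ℝ,
        (∫ s in Icc (0:ℝ) 1, g s * A.indicator (fun _ => (1:ℝ)) s) = ∫ s in A, g s ∂μ := by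
      intro g
      rw [← integral_indicator hA]
      refine integral_congr_ae (Eventually.of_forall fun s => ?_)
      by_cases hs : s ∈ A <;> simp [indicator_apply, hs]
    simp only [← hμ] at heq
    simpa only [heq] using h2
  -- integrability of the ξ j
  have hξjint : ∀ j, Integrable (ξ j) μ := by
    intro j
    refine ⟨(hξmeas j).aestronglyMeasurable, ?_⟩
    apply HasFiniteIntegral.of_bounded (C := K)
    filter_upwards [hξbdd j] with s hs
    rw [Real.norm_eq_abs, abs_of_nonneg hs.1]; exact hs.2
  -- bounds on limit set integrals
  have hA_nonneg : ∀ A : Set ℝ, MeasurableSet A → 0 ≤ ∫ s in A, ξlim s ∂μ := by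
    intro A hA
    refine ge_of_tendsto' (key A hA) fun j => ?_
    apply integral_nonneg_of_ae
    filter_upwards [ae_restrict_of_ae (hξbdd j)] with s hs using hs.1
  have hA_le : ∀ A : Set ℝ, MeasurableSet A → ∫ s in A, ξlim s ∂μ ≤ K * (μ A).toReal := by
    intro A hA
    refine le_of_tendsto' (key A hA) fun j => ?_
    calc ∫ s in A, ξ j s ∂μ ≤ ∫ _ in A, K ∂μ := by
          apply integral_mono_ae ((hξjint j).restrict) (integrable_const K)
          filter_upwards [ae_restrict_of_ae (hξbdd j)] with s hs using hs.2
      _ = K * (μ A).toReal := by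
          rw [setIntegral_const, smul_eq_mul, mul_comm]; rfl
  -- null sets where ξlim is out of range
  have hnull : ∀ q r : ℝ, (r < 0 ∨ K < q) → μ (ξlim ⁻¹' Icc q r) = 0 := by
    intro q r hqr
    set A := ξlim ⁻¹' Icc q r with hAdef
    have hA : MeasurableSet A := hξlimmeas measurableSet_Icc
    by_cases hqr' : q ≤ r
    · have hintA : Integrable ξlim (μ.restrict A) := by
        refine ⟨hξlimmeas.aestronglyMeasurable, ?_⟩
        apply HasFiniteIntegral.of_bounded (C := max |q| |r|)
        filter_upwards [ae_restrict_mem hA] with s hs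
        obtain ⟨h1, h2⟩ := hs
        rw [Real.norm_eq_abs, abs_le]
        constructor
        · have := neg_abs_le q
          have := le_max_left |q| |r|
          linarith
        · have := le_abs_self r
          have := le_max_right |q| |r|
          linarith
      have hm : (0:ℝ) ≤ (μ A).toReal := ENNReal.toReal_nonneg
      have hup : ∫ s in A, ξlim s ∂μ ≤ r * (μ A).toReal := by
        calc ∫ s in A, ξlim s ∂μ ≤ ∫ _ in A, r ∂μ := by
              apply integral_mono_ae hintA (integrable_const r)
              filter_upwards [ae_restrict_mem hA] with s hs using hs.2
          _ = r * (μ A).toReal := by rw [setIntegral_const, smul_eq_mul, mul_comm]; rfl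
      have hlow : q * (μ A).toReal ≤ ∫ s in A, ξlim s ∂μ := by
        calc q * (μ A).toReal = ∫ _ in A, q ∂μ := by
              rw [setIntegral_const, smul_eq_mul, mul_comm]; rfl
          _ ≤ ∫ s in A, ξlim s ∂μ := by
              apply integral_mono_ae (integrable_const q) hintA
              filter_upwards [ae_restrict_mem hA] with s hs using hs.1
      have h0 := hA_nonneg A hA
      have hKle := hA_le A hA
      have hm0 : (μ A).toReal = 0 := by
        refine le_antisymm ?_ hm
        rcases hqr with h | h
        · nlinarith
        · nlinarith
      have hne : μ A ≠ ⊤ := measure_ne_top μ A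
      exact ((ENNReal.toReal_eq_zero_iff _).mp hm0).resolve_right hne
    · have : A = ∅ := by
        rw [hAdef, Icc_eq_empty hqr', preimage_empty]
      simp [this]
  -- ξlim ≥ 0 a.e.
  have hnn : ∀ᵐ s ∂μ, 0 ≤ ξlim s := by
    have hnullset : μ {s | ξlim s < 0} = 0 := by
      have hsub : {s | ξlim s < 0} ⊆
          ⋃ M : ℕ, ξlim ⁻¹' Icc (-(M+1:ℝ)) (-(1/(M+1))) := by
        intro t ht
        simp only [mem_setOf_eq] at ht
        obtain ⟨M, hM⟩ := exists_nat_one_div_lt (neg_pos.mpr ht)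
        refine mem_iUnion.mpr ⟨max M ⌈-ξlim t⌉₊, ?_, ?_⟩
        · have h1 : -ξlim t ≤ (⌈-ξlim t⌉₊ : ℝ) := Nat.le_ceil _
          have h2 : (⌈-ξlim t⌉₊ : ℝ) ≤ (max M ⌈-ξlim t⌉₊ : ℕ) :=
            Nat.cast_le.mpr (le_max_right M _)
          linarith
        · have h3 : (1:ℝ)/((max M ⌈-ξlim t⌉₊ : ℕ) + 1) ≤ 1/(M+1) := by
            apply one_div_le_one_div_of_le (by positivity)
            have : (M:ℝ) ≤ (max M ⌈-ξlim t⌉₊ : ℕ) := Nat.cast_le.mpr (le_max_left _ _)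
            linarith
          linarith
      refine measure_mono_null hsub (measure_iUnion_null fun M => hnull _ _ (Or.inl ?_))
      have : (0:ℝ) < 1/(M+1) := by positivity
      linarith
    rw [ae_iff]
    convert hnullset using 2
    ext s
    simp [not_le]
  -- ξlim ≤ K + 1 a.e.
  have hub : ∀ᵐ s ∂μ, ξlim s ≤ K + 1 := by
    have hnullset : μ {s | K + 1 < ξlim s} = 0 := by
      have hsub : {s | K + 1 < ξlim s} ⊆
          ⋃ M : ℕ, ξlim ⁻¹' Icc (K+1) (K+1+M) := by
        intro t ht
        simp only [mem_setOf_eq] at ht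
        refine mem_iUnion.mpr ⟨⌈ξlim t - (K+1)⌉₊, le_of_lt ht, ?_⟩
        have := Nat.le_ceil (ξlim t - (K+1))
        linarith
      refine measure_mono_null hsub (measure_iUnion_null fun M => hnull _ _ (Or.inr (by linarith)))
    rw [ae_iff]
    convert hnullset using 2
    ext s
    simp [not_le]
  -- ξlim integrable
  have hξlimint : Integrable ξlim μ := by
    refine ⟨hξlimmeas.aestronglyMeasurable, ?_⟩
    apply HasFiniteIntegral.of_bounded (C := K + 1)
    filter_upwards [hnn, hub] with s h1 h2
    rw [Real.norm_eq_abs, abs_of_nonneg h1]; exact h2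
  -- main step
  have main : ∀ A : Set ℝ, MeasurableSet A →
      (∀ᶠ j in atTop, ∀ᵐ s ∂μ, s ∈ A → ξ j s = 0) →
      ∀ᵐ s ∂μ, s ∈ A → ξlim s = 0 := by
    intro A hA hev
    have h1 : (fun j => ∫ s in A, ξ j s ∂μ) =ᶠ[atTop] fun _ => (0:ℝ) := by
      filter_upwards [hev] with j hj
      apply integral_eq_zero_of_ae
      have h2 : ∀ᵐ s ∂μ.restrict A, s ∈ A → ξ j s = 0 := ae_restrict_of_ae hj
      filter_upwards [h2, ae_restrict_mem hA] with s hs hsA using hs hsA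
    have h2 : ∫ s in A, ξlim s ∂μ = 0 :=
      tendsto_nhds_unique (key A hA) ((tendsto_congr' h1).mpr tendsto_const_nhds)
    have h3 : 0 ≤ᵐ[μ.restrict A] ξlim := ae_restrict_of_ae hnn
    have h4 := (integral_eq_zero_iff_of_nonneg_ae h3 (hξlimint.restrict)).mp h2
    exact (ae_restrict_iff' hA).mp h4
  by_cases hne : (interior C)ᶜ.Nonempty
  · -- main case: complement of interior nonempty
    have hxlimcont : ContinuousOn xlim (Icc (0:ℝ) 1) :=
      hxunif.continuousOn (Eventually.of_forall hxcont).frequently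
    set f : ℝ → ℝ := fun t => Metric.infDist (xlim t) (interior C)ᶜ with hfdef
    have hfcont : ContinuousOn f (Icc (0:ℝ) 1) :=
      (Metric.continuous_infDist_pt _).comp_continuousOn hxlimcont
    set E : ℕ → Set ℝ := fun m => Icc (0:ℝ) 1 ∩ f ⁻¹' Ici (1/(m+1)) with hEdef
    have hEmeas : ∀ m, MeasurableSet (E m) := fun m =>
      (hfcont.preimage_isClosed_of_isClosed isClosed_Icc isClosed_Ici).measurableSet
    have hev : ∀ m, ∀ᶠ j in atTop, ∀ᵐ s ∂μ, s ∈ E m → ξ j s = 0 := by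
      intro m
      have hpos : (0:ℝ) < 1/(m+1) := by positivity
      have hunif := (Metric.tendstoUniformlyOn_iff.mp hxunif) (1/(m+1)) hpos
      filter_upwards [hunif] with j hj
      filter_upwards [hξsupp j] with s hs hsE
      apply hs
      by_contra hmem
      have h1 : f s ≤ dist (xlim s) (x j s) := Metric.infDist_le_dist_of_mem hmem
      have h2 := hj s hsE.1
      have h3 : 1/((m:ℝ)+1) ≤ f s := hsE.2
      linarith
    have h0 : ∀ᵐ s ∂μ, ∀ m, s ∈ E m → ξlim s = 0 :=
      ae_all_iff.mpr fun m => main _ (hEmeas m) (hev m)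
    filter_upwards [h0, ae_restrict_mem measurableSet_Icc] with t ht htI hintC
    have hnotmem : xlim t ∉ (interior C)ᶜ := fun h => h hintC
    have hpos : 0 < f t :=
      ((isOpen_interior.isClosed_compl).notMem_iff_infDist_pos hne).mp hnotmem
    obtain ⟨m, hm⟩ := exists_nat_one_div_lt hpos
    exact ht m ⟨htI, le_of_lt hm⟩
  · -- interior C = univ
    have huniv : interior C = univ := by
      rwa [not_nonempty_iff_eq_empty, compl_empty_iff] at hne
    have hev : ∀ᶠ j in atTop, ∀ᵐ s ∂μ, s ∈ (univ : Set ℝ) → ξ j s = 0 :=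
      Eventually.of_forall fun j => (hξsupp j).mono fun s hs _ => hs (huniv ▸ mem_univ _)
    have h0 := main univ MeasurableSet.univ hev
    filter_upwards [h0] with t ht _
    exact ht (mem_univ t)
end

section
/- Let K⊆ℝⁿ and K'⊆ℝᵐ be compact, M>0, κ≥0. Let f:[0,1]×ℝⁿ×ℝᵐ→ℝⁿ be such that f(·,x,u) is Lebesgue measurable for each (x,u), and for a.e. t the map (x,u)↦f(t,x,u) is continuous on K×K' with ‖f(t,x,u)‖≤M there. Let G:ℝⁿ→ℝⁿ be continuous. Suppose (x_j,u_j) are continuous functions on [0,1] with values in K×K' converging uniformly to (x̃,ũ), and ξ_j∈L^∞([0,1];ℝ) with 0≤ξ_j≤κ a.e. converge to ξ̃ in the weak* topology of L^∞([0,1];ℝ). If for every j and every t∈[0,1] one has x_j(t)=x_j(0)+∫₀ᵗ[f(s,x_j(s),u_j(s))−ξ_j(s)G(x_j(s))]ds, then for every t∈[0,1], x̃(t)=x̃(0)+∫₀ᵗ[f(s,x̃(s),ũ(s))−ξ̃(s)G(x̃(s))]ds. -/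
open MeasureTheory Set Filter intervalIntegral

open Topology

set_option maxHeartbeats 1000000

private lemma meas_comp_step {β : Type*} {E : Type*} [MeasurableSpace E]
    (F : ℝ → β → E) (hF : ∀ b, Measurable fun s => F s b)
    (c : ℝ → β) (w : ℝ → ℝ) (hw : Measurable w)
    {T : Set ℝ} (hT : T.Countable) (hrange : ∀ s, w s ∈ T) :
    Measurable fun s => F s (c (w s)) := by
  intro A hA
  have hset : (fun s => F s (c (w s))) ⁻¹' A
      = ⋃ d ∈ T, (w ⁻¹' {d}) ∩ {s | F s (c d) ∈ A} := by
    ext s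
    simp only [Set.mem_preimage, Set.mem_iUnion, Set.mem_inter_iff, Set.mem_setOf_eq,
      Set.mem_singleton_iff, exists_prop]
    constructor
    · intro h
      exact ⟨w s, hrange s, rfl, h⟩
    · rintro ⟨d, -, rfl, h⟩
      exact h
  rw [hset]
  exact MeasurableSet.biUnion hT fun d _ =>
    (hw (measurableSet_singleton d)).inter (hF (c d) hA)

private noncomputable def wstep (k : ℕ) (s : ℝ) : ℝ := (⌊((k:ℝ)+1) * s⌋₊ : ℝ) / ((k:ℝ)+1)

private lemma wstep_props (k : ℕ) {s : ℝ} (hs : s ∈ Icc (0:ℝ) 1) :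
    wstep k s ∈ Icc (0:ℝ) 1 ∧ s - 1/((k:ℝ)+1) ≤ wstep k s ∧ wstep k s ≤ s := by
  have hkpos : (0:ℝ) < (k:ℝ) + 1 := by positivity
  have h1 : (0:ℝ) ≤ ((k:ℝ)+1) * s := by nlinarith [hs.1]
  have hfl : (⌊((k:ℝ)+1) * s⌋₊ : ℝ) ≤ ((k:ℝ)+1) * s := Nat.floor_le h1
  have hfl2 : ((k:ℝ)+1) * s < (⌊((k:ℝ)+1) * s⌋₊ : ℝ) + 1 := Nat.lt_floor_add_one _
  have hle : wstep k s ≤ s := by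
    rw [wstep, div_le_iff₀ hkpos]; nlinarith
  have hge : s - 1/((k:ℝ)+1) ≤ wstep k s := by
    rw [wstep, le_div_iff₀ hkpos]
    have h2 : (s - 1/((k:ℝ)+1)) * ((k:ℝ)+1) = ((k:ℝ)+1) * s - 1 := by field_simp
    rw [h2]; linarith
  have h0 : (0:ℝ) ≤ wstep k s := by rw [wstep]; positivity
  exact ⟨⟨h0, hle.trans hs.2⟩, hge, hle⟩

private lemma wstep_measurable (k : ℕ) : Measurable (wstep k) := by
  have hmono : Monotone fun s : ℝ => (⌊((k:ℝ)+1) * s⌋₊ : ℝ) := by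
    intro a b hab
    have h : ((k:ℝ)+1) * a ≤ ((k:ℝ)+1) * b := by nlinarith [Nat.cast_nonneg (α := ℝ) k]
    exact Nat.cast_le.mpr (Nat.floor_mono h)
  exact hmono.measurable.div_const _

private lemma wstep_tendsto {s : ℝ} (hs : s ∈ Icc (0:ℝ) 1) :
    Tendsto (fun k : ℕ => wstep k s) atTop (𝓝 s) := by
  have h1 : Tendsto (fun k : ℕ => s - 1/((k:ℝ)+1)) atTop (𝓝 s) := by
    have := tendsto_one_div_add_atTop_nhds_zero_nat (𝕜 := ℝ)
    simpa using tendsto_const_nhds.sub this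
  exact tendsto_of_tendsto_of_tendsto_of_le_of_le h1 tendsto_const_nhds
    (fun k => (wstep_props k hs).2.1) (fun k => (wstep_props k hs).2.2)

private lemma carath_aesm {n m : ℕ} {K : Set (EuclideanSpace ℝ (Fin n))}
    {K' : Set (EuclideanSpace ℝ (Fin m))}
    (f : ℝ → EuclideanSpace ℝ (Fin n) → EuclideanSpace ℝ (Fin m) → EuclideanSpace ℝ (Fin n))
    (hfmeas : ∀ x u, Measurable fun t => f t x u)
    (hf : ∀ᵐ t ∂(volume.restrict (Icc (0:ℝ) 1)),
      ContinuousOn (fun p : EuclideanSpace ℝ (Fin n) × EuclideanSpace ℝ (Fin m) =>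
        f t p.1 p.2) (K ×ˢ K'))
    (y : ℝ → EuclideanSpace ℝ (Fin n)) (v : ℝ → EuclideanSpace ℝ (Fin m))
    (hy : ContinuousOn y (Icc (0:ℝ) 1)) (hv : ContinuousOn v (Icc (0:ℝ) 1))
    (hyK : ∀ s ∈ Icc (0:ℝ) 1, y s ∈ K) (hvK : ∀ s ∈ Icc (0:ℝ) 1, v s ∈ K') :
    AEStronglyMeasurable (fun s => f s (y s) (v s)) (volume.restrict (Icc (0:ℝ) 1)) := by
  have hwrange : ∀ (k : ℕ) (s : ℝ), wstep k s ∈ Set.range (fun i : ℕ => (i : ℝ) / ((k:ℝ)+1)) := by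
    intro k s; exact ⟨⌊((k:ℝ)+1) * s⌋₊, rfl⟩
  have happrox : ∀ k, AEStronglyMeasurable (fun s => f s (y (wstep k s)) (v (wstep k s)))
      (volume.restrict (Icc (0:ℝ) 1)) := by
    intro k
    exact (meas_comp_step (fun s d => f s (y d) (v d)) (fun d => hfmeas (y d) (v d)) id (wstep k)
      (wstep_measurable k) (Set.countable_range _) (hwrange k)).aestronglyMeasurable
  apply aestronglyMeasurable_of_tendsto_ae atTop happrox
  filter_upwards [hf, ae_restrict_mem (measurableSet_Icc : MeasurableSet (Icc (0:ℝ) 1))]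
    with s hcont hs
  have hwithin : Tendsto (fun k : ℕ => wstep k s) atTop (𝓝[Icc (0:ℝ) 1] s) :=
    tendsto_nhdsWithin_of_tendsto_nhds_of_eventually_within _ (wstep_tendsto hs)
      (Eventually.of_forall fun k => (wstep_props k hs).1)
  have hyw : Tendsto (fun k : ℕ => y (wstep k s)) atTop (𝓝 (y s)) :=
    Filter.Tendsto.comp (hy s hs) hwithin
  have hvw : Tendsto (fun k : ℕ => v (wstep k s)) atTop (𝓝 (v s)) :=
    Filter.Tendsto.comp (hv s hs) hwithin
  have hp : Tendsto (fun k : ℕ => (y (wstep k s), v (wstep k s))) atTop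
      (𝓝[K ×ˢ K'] (y s, v s)) :=
    tendsto_nhdsWithin_of_tendsto_nhds_of_eventually_within _ (hyw.prodMk_nhds hvw)
      (Eventually.of_forall fun k => ⟨hyK _ (wstep_props k hs).1, hvK _ (wstep_props k hs).1⟩)
  exact Filter.Tendsto.comp (hcont (y s, v s) ⟨hyK s hs, hvK s hs⟩) hp
set_option maxHeartbeats 2000000

private lemma icc_finite : IsFiniteMeasure (volume.restrict (Icc (0:ℝ) 1)) := by
  constructor
  rw [Measure.restrict_apply_univ]
  simp [Real.volume_Icc]

private lemma key_ind (S : Set ℝ) (hS : MeasurableSet S) (ζ : ℝ → ℝ) :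
    (∫ s in Icc (0:ℝ) 1, ζ s * S.indicator (fun _ => (1:ℝ)) s)
      = ∫ s, ζ s ∂((volume.restrict (Icc (0:ℝ) 1)).restrict S) := by
  have hfe : (fun s => ζ s * S.indicator (fun _ => (1:ℝ)) s) = S.indicator ζ := by
    ext s; by_cases h : s ∈ S <;>
      simp [Set.indicator_of_mem, Set.indicator_of_notMem, h]
  calc (∫ s in Icc (0:ℝ) 1, ζ s * S.indicator (fun _ => (1:ℝ)) s)
      = ∫ s, S.indicator ζ s ∂(volume.restrict (Icc (0:ℝ) 1)) := by rw [hfe]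
    _ = _ := integral_indicator hS

private lemma null_step (κ : ℝ) (ξ : ℕ → ℝ → ℝ) (hξmeas : ∀ j, Measurable (ξ j))
    (hξbdd : ∀ j, ∀ᵐ s ∂(volume.restrict (Icc (0:ℝ) 1)), 0 ≤ ξ j s ∧ ξ j s ≤ κ)
    (ξlim : ℝ → ℝ) (hξlimmeas : Measurable ξlim)
    (hweak : ∀ h : ℝ → ℝ, IntegrableOn h (Icc (0:ℝ) 1) →
      Tendsto (fun j => ∫ s in Icc (0:ℝ) 1, ξ j s * h s) atTop
        (nhds (∫ s in Icc (0:ℝ) 1, ξlim s * h s)))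
    (S : Set ℝ) (hS : MeasurableSet S) (N : ℝ) (hbd : ∀ s ∈ S, |ξlim s| ≤ N)
    (hout : (∀ s ∈ S, ξlim s < 0) ∨ (∀ s ∈ S, κ < ξlim s)) :
    (volume.restrict (Icc (0:ℝ) 1)) S = 0 := by
  haveI := icc_finite
  have hρle : (volume.restrict (Icc (0:ℝ) 1)).restrict S ≤ volume.restrict (Icc (0:ℝ) 1) :=
    Measure.restrict_le_self
  haveI : IsFiniteMeasure ((volume.restrict (Icc (0:ℝ) 1)).restrict S) := by
    constructor
    calc (volume.restrict (Icc (0:ℝ) 1)).restrict S univ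
        ≤ (volume.restrict (Icc (0:ℝ) 1)) univ := hρle _
      _ < ⊤ := measure_lt_top _ univ
  have hind : IntegrableOn (S.indicator (fun _ => (1:ℝ))) (Icc (0:ℝ) 1) :=
    (integrable_const (1:ℝ)).indicator hS
  have hlim := hweak _ hind
  rw [key_ind S hS ξlim] at hlim
  replace hlim := hlim.congr (fun j => key_ind S hS (ξ j))
  have hintj : ∀ j, Integrable (ξ j) ((volume.restrict (Icc (0:ℝ) 1)).restrict S) := by
    intro j
    apply Integrable.mono' (integrable_const κ) (hξmeas j).aestronglyMeasurable
    filter_upwards [(hξbdd j).filter_mono (ae_mono hρle)] with s hs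
    rw [Real.norm_eq_abs, abs_of_nonneg hs.1]; exact hs.2
  have hintl : Integrable ξlim ((volume.restrict (Icc (0:ℝ) 1)).restrict S) := by
    apply Integrable.mono' (integrable_const N) hξlimmeas.aestronglyMeasurable
    filter_upwards [ae_restrict_mem hS] with s hs
    exact hbd s hs
  have hmemS := ae_restrict_mem (μ := volume.restrict (Icc (0:ℝ) 1)) hS
  have hSuniv : (volume.restrict (Icc (0:ℝ) 1)).restrict S univ
      = (volume.restrict (Icc (0:ℝ) 1)) S := Measure.restrict_apply_univ S
  rcases hout with hneg | hpos
  · have hge0 : 0 ≤ ∫ s, ξlim s ∂((volume.restrict (Icc (0:ℝ) 1)).restrict S) := by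
      refine ge_of_tendsto' hlim fun j => ?_
      apply MeasureTheory.integral_nonneg_of_ae
      filter_upwards [(hξbdd j).filter_mono (ae_mono hρle)] with s hs using hs.1
    have hle0 : ∫ s, ξlim s ∂((volume.restrict (Icc (0:ℝ) 1)).restrict S) ≤ 0 := by
      apply MeasureTheory.integral_nonpos_of_ae
      filter_upwards [hmemS] with s hs using (hneg s hs).le
    have hzero : ∫ s, (fun s => -ξlim s) s ∂((volume.restrict (Icc (0:ℝ) 1)).restrict S) = 0 := by
      rw [MeasureTheory.integral_neg, le_antisymm hle0 hge0, neg_zero]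
    have hnn : 0 ≤ᶠ[ae ((volume.restrict (Icc (0:ℝ) 1)).restrict S)] fun s => -ξlim s := by
      filter_upwards [hmemS] with s hs
      simp only [Pi.zero_apply]
      linarith [hneg s hs]
    have haeeq := (MeasureTheory.integral_eq_zero_iff_of_nonneg_ae hnn hintl.neg).mp hzero
    have hfalse : ∀ᵐ s ∂((volume.restrict (Icc (0:ℝ) 1)).restrict S), False := by
      filter_upwards [haeeq, hmemS] with s h1 h2
      have h3 : -ξlim s = 0 := h1
      linarith [hneg s h2]
    rw [← hSuniv]
    have := ae_iff.mp hfalse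
    simpa using this
  · have hleκ : ∫ s, ξlim s ∂((volume.restrict (Icc (0:ℝ) 1)).restrict S)
        ≤ ∫ _, κ ∂((volume.restrict (Icc (0:ℝ) 1)).restrict S) := by
      refine le_of_tendsto' hlim fun j => ?_
      apply MeasureTheory.integral_mono_ae (hintj j) (integrable_const κ)
      filter_upwards [(hξbdd j).filter_mono (ae_mono hρle)] with s hs using hs.2
    have hsub : ∫ s, (fun s => ξlim s - κ) s ∂((volume.restrict (Icc (0:ℝ) 1)).restrict S)
        = (∫ s, ξlim s ∂((volume.restrict (Icc (0:ℝ) 1)).restrict S))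
          - ∫ _, κ ∂((volume.restrict (Icc (0:ℝ) 1)).restrict S) :=
      MeasureTheory.integral_sub hintl (integrable_const κ)
    have h2 : 0 ≤ ∫ s, (fun s => ξlim s - κ) s ∂((volume.restrict (Icc (0:ℝ) 1)).restrict S) := by
      apply MeasureTheory.integral_nonneg_of_ae
      filter_upwards [hmemS] with s hs
      simp only [Pi.zero_apply]
      linarith [hpos s hs]
    have hzero : ∫ s, (fun s => ξlim s - κ) s ∂((volume.restrict (Icc (0:ℝ) 1)).restrict S) = 0 := by
      have h1 : ∫ s, (fun s => ξlim s - κ) s ∂((volume.restrict (Icc (0:ℝ) 1)).restrict S) ≤ 0 := by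
        rw [hsub]; linarith
      linarith
    have hnn : 0 ≤ᶠ[ae ((volume.restrict (Icc (0:ℝ) 1)).restrict S)] fun s => ξlim s - κ := by
      filter_upwards [hmemS] with s hs
      simp only [Pi.zero_apply]
      linarith [hpos s hs]
    have haeeq := (MeasureTheory.integral_eq_zero_iff_of_nonneg_ae hnn
      (hintl.sub (integrable_const κ))).mp hzero
    have hfalse : ∀ᵐ s ∂((volume.restrict (Icc (0:ℝ) 1)).restrict S), False := by
      filter_upwards [haeeq, hmemS] with s h1 h2
      have h3 : ξlim s - κ = 0 := h1
      linarith [hpos s h2]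
    rw [← hSuniv]
    have := ae_iff.mp hfalse
    simpa using this

private lemma xilim_bounds (κ : ℝ) (hκ : 0 ≤ κ) (ξ : ℕ → ℝ → ℝ) (hξmeas : ∀ j, Measurable (ξ j))
    (hξbdd : ∀ j, ∀ᵐ s ∂(volume.restrict (Icc (0:ℝ) 1)), 0 ≤ ξ j s ∧ ξ j s ≤ κ)
    (ξlim : ℝ → ℝ) (hξlimmeas : Measurable ξlim)
    (hweak : ∀ h : ℝ → ℝ, IntegrableOn h (Icc (0:ℝ) 1) →
      Tendsto (fun j => ∫ s in Icc (0:ℝ) 1, ξ j s * h s) atTop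
        (nhds (∫ s in Icc (0:ℝ) 1, ξlim s * h s))) :
    ∀ᵐ s ∂(volume.restrict (Icc (0:ℝ) 1)), 0 ≤ ξlim s ∧ ξlim s ≤ κ := by
  have hlow : (volume.restrict (Icc (0:ℝ) 1)) {s | ξlim s < 0} = 0 := by
    have hsubU : {s | ξlim s < 0} ⊆ ⋃ N : ℕ, {s | ξlim s < 0 ∧ -(N:ℝ) ≤ ξlim s} := by
      intro s hs
      obtain ⟨N, hN⟩ := exists_nat_ge (-ξlim s)
      exact Set.mem_iUnion.mpr ⟨N, hs, by linarith⟩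
    refine measure_mono_null hsubU (measure_iUnion_null fun N => ?_)
    refine null_step κ ξ hξmeas hξbdd ξlim hξlimmeas hweak _
      ((measurableSet_lt hξlimmeas measurable_const).inter
        (measurableSet_le measurable_const hξlimmeas)) N (fun s hs => ?_)
      (Or.inl fun s hs => hs.1)
    have h1 : ξlim s < 0 := hs.1
    have h2 : -(N:ℝ) ≤ ξlim s := hs.2
    rw [abs_le]
    constructor <;> [linarith; linarith [Nat.cast_nonneg (α := ℝ) N]]
  have hhigh : (volume.restrict (Icc (0:ℝ) 1)) {s | κ < ξlim s} = 0 := by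
    have hsubU : {s | κ < ξlim s} ⊆ ⋃ N : ℕ, {s | κ < ξlim s ∧ ξlim s ≤ κ + (N:ℝ)} := by
      intro s hs
      obtain ⟨N, hN⟩ := exists_nat_ge (ξlim s - κ)
      exact Set.mem_iUnion.mpr ⟨N, hs, by linarith⟩
    refine measure_mono_null hsubU (measure_iUnion_null fun N => ?_)
    refine null_step κ ξ hξmeas hξbdd ξlim hξlimmeas hweak _
      ((measurableSet_lt measurable_const hξlimmeas).inter
        (measurableSet_le hξlimmeas measurable_const)) (κ + (N:ℝ)) (fun s hs => ?_)
      (Or.inr fun s hs => hs.1)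
    have h1 : κ < ξlim s := hs.1
    have h2 : ξlim s ≤ κ + (N:ℝ) := hs.2
    rw [abs_le]
    constructor <;> [linarith [Nat.cast_nonneg (α := ℝ) N]; linarith]
  rw [ae_iff]
  refine measure_mono_null (fun s hs => ?_) (measure_union_null hlow hhigh)
  simp only [Set.mem_setOf_eq, not_and_or, not_le] at hs
  rcases hs with h | h
  · exact Or.inl h
  · exact Or.inr h
/-- Closure of the perturbed sweeping dynamics: if continuous `(x_j, u_j)`
with values in compact sets `K × K'` converge uniformly to `(x̃, ũ)`, the multipliers
`0 ≤ ξ_j ≤ κ` converge weakly* in `L^∞` to `ξ̃`, and each `(x_j, u_j, ξ_j)` satisfies the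
integral form of `ẋ = f(t,x,u) − ξ G(x)`, then so does `(x̃, ũ, ξ̃)`. -/
theorem stmt2 {n m : ℕ}
    (K : Set (EuclideanSpace ℝ (Fin n))) (K' : Set (EuclideanSpace ℝ (Fin m)))
    (hK : IsCompact K) (hK' : IsCompact K') (M κ : ℝ) (hM : 0 < M) (hκ : 0 ≤ κ)
    (f : ℝ → EuclideanSpace ℝ (Fin n) → EuclideanSpace ℝ (Fin m) → EuclideanSpace ℝ (Fin n))
    (hfmeas : ∀ x u, Measurable fun t => f t x u)
    (hf : ∀ᵐ t ∂(volume.restrict (Icc (0:ℝ) 1)),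
      ContinuousOn (fun p : EuclideanSpace ℝ (Fin n) × EuclideanSpace ℝ (Fin m) =>
        f t p.1 p.2) (K ×ˢ K') ∧
      ∀ x ∈ K, ∀ u ∈ K', ‖f t x u‖ ≤ M)
    (G : EuclideanSpace ℝ (Fin n) → EuclideanSpace ℝ (Fin n)) (hG : Continuous G)
    (x : ℕ → ℝ → EuclideanSpace ℝ (Fin n)) (u : ℕ → ℝ → EuclideanSpace ℝ (Fin m))
    (xlim : ℝ → EuclideanSpace ℝ (Fin n)) (ulim : ℝ → EuclideanSpace ℝ (Fin m))
    (hxcont : ∀ j, ContinuousOn (x j) (Icc (0:ℝ) 1))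
    (hucont : ∀ j, ContinuousOn (u j) (Icc (0:ℝ) 1))
    (hxmem : ∀ j, ∀ t ∈ Icc (0:ℝ) 1, x j t ∈ K)
    (humem : ∀ j, ∀ t ∈ Icc (0:ℝ) 1, u j t ∈ K')
    (hxunif : TendstoUniformlyOn x xlim atTop (Icc (0:ℝ) 1))
    (huunif : TendstoUniformlyOn u ulim atTop (Icc (0:ℝ) 1))
    (ξ : ℕ → ℝ → ℝ) (hξmeas : ∀ j, Measurable (ξ j))
    (hξbdd : ∀ j, ∀ᵐ s ∂(volume.restrict (Icc (0:ℝ) 1)), 0 ≤ ξ j s ∧ ξ j s ≤ κ)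
    (ξlim : ℝ → ℝ) (hξlimmeas : Measurable ξlim)
    (hweak : ∀ h : ℝ → ℝ, IntegrableOn h (Icc (0:ℝ) 1) →
      Tendsto (fun j => ∫ s in Icc (0:ℝ) 1, ξ j s * h s) atTop
        (nhds (∫ s in Icc (0:ℝ) 1, ξlim s * h s)))
    (heq : ∀ j, ∀ t ∈ Icc (0:ℝ) 1,
      x j t = x j 0 + ∫ s in (0:ℝ)..t, (f s (x j s) (u j s) - ξ j s • G (x j s))) :
    ∀ t ∈ Icc (0:ℝ) 1,
      xlim t = xlim 0 + ∫ s in (0:ℝ)..t, (f s (xlim s) (ulim s) - ξlim s • G (xlim s)) := by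
  intro t ht
  have ht0 : (0:ℝ) ≤ t := ht.1
  have hsub : Ioc (0:ℝ) t ⊆ Icc (0:ℝ) 1 := fun s hs => ⟨hs.1.le, hs.2.trans ht.2⟩
  have hle : volume.restrict (Ioc (0:ℝ) t) ≤ volume.restrict (Icc (0:ℝ) 1) :=
    Measure.restrict_mono hsub le_rfl
  haveI : IsFiniteMeasure (volume.restrict (Ioc (0:ℝ) t)) := by
    constructor
    rw [Measure.restrict_apply_univ]
    simp [Real.volume_Ioc]
  -- limit functions stay in the compact sets and are continuous
  have hxlimmem : ∀ s ∈ Icc (0:ℝ) 1, xlim s ∈ K := fun s hs =>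
    hK.isClosed.mem_of_tendsto (hxunif.tendsto_at hs)
      (Eventually.of_forall fun j => hxmem j s hs)
  have hulimmem : ∀ s ∈ Icc (0:ℝ) 1, ulim s ∈ K' := fun s hs =>
    hK'.isClosed.mem_of_tendsto (huunif.tendsto_at hs)
      (Eventually.of_forall fun j => humem j s hs)
  have hxlimcont : ContinuousOn xlim (Icc (0:ℝ) 1) :=
    hxunif.continuousOn (Eventually.of_forall hxcont).frequently
  have hulimcont : ContinuousOn ulim (Icc (0:ℝ) 1) :=
    huunif.continuousOn (Eventually.of_forall hucont).frequently
  -- bound for G on K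
  obtain ⟨CG, hCG⟩ := hK.exists_bound_of_continuousOn hG.continuousOn
  have hCG0 : 0 ≤ CG :=
    le_trans (norm_nonneg _) (hCG _ (hxmem 0 0 ⟨le_refl _, zero_le_one⟩))
  -- ξ bounds transferred to Ioc 0 t, ξlim bounds
  have hξbdd' : ∀ j, ∀ᵐ s ∂(volume.restrict (Ioc (0:ℝ) t)), 0 ≤ ξ j s ∧ ξ j s ≤ κ :=
    fun j => (hξbdd j).filter_mono (ae_mono hle)
  have hξlimbdd : ∀ᵐ s ∂(volume.restrict (Icc (0:ℝ) 1)), 0 ≤ ξlim s ∧ ξlim s ≤ κ :=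
    xilim_bounds κ hκ ξ hξmeas hξbdd ξlim hξlimmeas hweak
  have hξlimbdd' : ∀ᵐ s ∂(volume.restrict (Ioc (0:ℝ) t)), 0 ≤ ξlim s ∧ ξlim s ≤ κ :=
    hξlimbdd.filter_mono (ae_mono hle)
  have hmemIoc := ae_restrict_mem (μ := volume) (measurableSet_Ioc (a := (0:ℝ)) (b := t))
  -- measurability of the Carathéodory compositions
  have hFm : ∀ j, AEStronglyMeasurable (fun s => f s (x j s) (u j s))
      (volume.restrict (Ioc (0:ℝ) t)) := fun j =>
    (carath_aesm f hfmeas (hf.mono fun t h => h.1) (x j) (u j) (hxcont j) (hucont j)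
      (hxmem j) (humem j)).mono_measure hle
  have hFlm : AEStronglyMeasurable (fun s => f s (xlim s) (ulim s))
      (volume.restrict (Ioc (0:ℝ) t)) :=
    (carath_aesm f hfmeas (hf.mono fun t h => h.1) xlim ulim hxlimcont hulimcont
      hxlimmem hulimmem).mono_measure hle
  have hGxm : ∀ j, AEStronglyMeasurable (fun s => G (x j s))
      (volume.restrict (Ioc (0:ℝ) t)) := fun j =>
    ((hG.comp_continuousOn (hxcont j)).aestronglyMeasurable measurableSet_Icc).mono_measure hle
  have hGxlm : AEStronglyMeasurable (fun s => G (xlim s)) (volume.restrict (Ioc (0:ℝ) t)) :=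
    ((hG.comp_continuousOn hxlimcont).aestronglyMeasurable measurableSet_Icc).mono_measure hle
  -- pointwise norm bounds
  have hfb : ∀ j, ∀ᵐ s ∂(volume.restrict (Ioc (0:ℝ) t)), ‖f s (x j s) (u j s)‖ ≤ M := by
    intro j
    filter_upwards [hf.filter_mono (ae_mono hle), hmemIoc] with s h1 h2
    exact h1.2 _ (hxmem j s (hsub h2)) _ (humem j s (hsub h2))
  have hflb : ∀ᵐ s ∂(volume.restrict (Ioc (0:ℝ) t)), ‖f s (xlim s) (ulim s)‖ ≤ M := by
    filter_upwards [hf.filter_mono (ae_mono hle), hmemIoc] with s h1 h2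
    exact h1.2 _ (hxlimmem s (hsub h2)) _ (hulimmem s (hsub h2))
  -- integrability
  have hIF : ∀ j, Integrable (fun s => f s (x j s) (u j s)) (volume.restrict (Ioc (0:ℝ) t)) :=
    fun j => Integrable.mono' (integrable_const M) (hFm j) (hfb j)
  have hIFl : Integrable (fun s => f s (xlim s) (ulim s)) (volume.restrict (Ioc (0:ℝ) t)) :=
    Integrable.mono' (integrable_const M) hFlm hflb
  have hIg : ∀ j, Integrable (fun s => ξ j s • G (x j s)) (volume.restrict (Ioc (0:ℝ) t)) := by
    intro j
    apply Integrable.mono' (integrable_const (κ * CG))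
      (((hξmeas j).aestronglyMeasurable).smul (hGxm j))
    filter_upwards [hξbdd' j, hmemIoc] with s h1 h2
    show ‖ξ j s • G (x j s)‖ ≤ κ * CG
    rw [norm_smul, Real.norm_eq_abs, abs_of_nonneg h1.1]
    exact mul_le_mul h1.2 (hCG _ (hxmem j s (hsub h2))) (norm_nonneg _) hκ
  have hIh : ∀ j, Integrable (fun s => ξ j s • G (xlim s)) (volume.restrict (Ioc (0:ℝ) t)) := by
    intro j
    apply Integrable.mono' (integrable_const (κ * CG))
      (((hξmeas j).aestronglyMeasurable).smul hGxlm)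
    filter_upwards [hξbdd' j, hmemIoc] with s h1 h2
    show ‖ξ j s • G (xlim s)‖ ≤ κ * CG
    rw [norm_smul, Real.norm_eq_abs, abs_of_nonneg h1.1]
    exact mul_le_mul h1.2 (hCG _ (hxlimmem s (hsub h2))) (norm_nonneg _) hκ
  have hIgl : Integrable (fun s => ξlim s • G (xlim s)) (volume.restrict (Ioc (0:ℝ) t)) := by
    apply Integrable.mono' (integrable_const (κ * CG))
      ((hξlimmeas.aestronglyMeasurable).smul hGxlm)
    filter_upwards [hξlimbdd', hmemIoc] with s h1 h2
    show ‖ξlim s • G (xlim s)‖ ≤ κ * CG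
    rw [norm_smul, Real.norm_eq_abs, abs_of_nonneg h1.1]
    exact mul_le_mul h1.2 (hCG _ (hxlimmem s (hsub h2))) (norm_nonneg _) hκ
  -- Limit L1 : the f-integrals converge (dominated convergence)
  have L1 : Tendsto (fun j => ∫ s in Ioc (0:ℝ) t, f s (x j s) (u j s)) atTop
      (𝓝 (∫ s in Ioc (0:ℝ) t, f s (xlim s) (ulim s))) := by
    apply MeasureTheory.tendsto_integral_of_dominated_convergence (fun _ => M) hFm
      (integrable_const M) hfb
    filter_upwards [hf.filter_mono (ae_mono hle), hmemIoc] with s h1 h2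
    have hsI : s ∈ Icc (0:ℝ) 1 := hsub h2
    have hx : Tendsto (fun j => x j s) atTop (𝓝 (xlim s)) := hxunif.tendsto_at hsI
    have hu : Tendsto (fun j => u j s) atTop (𝓝 (ulim s)) := huunif.tendsto_at hsI
    have hp : Tendsto (fun j => (x j s, u j s)) atTop (𝓝[K ×ˢ K'] (xlim s, ulim s)) :=
      tendsto_nhdsWithin_of_tendsto_nhds_of_eventually_within _ (hx.prodMk_nhds hu)
        (Eventually.of_forall fun j => ⟨hxmem j s hsI, humem j s hsI⟩)
    exact Filter.Tendsto.comp (h1.1 (xlim s, ulim s) ⟨hxlimmem s hsI, hulimmem s hsI⟩) hp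
  -- Limit L2 : the correction terms vanish
  have hIGd : ∀ j, Integrable (fun s => κ * ‖G (x j s) - G (xlim s)‖)
      (volume.restrict (Ioc (0:ℝ) t)) := by
    intro j
    apply Integrable.mono' (integrable_const (κ * (2 * CG)))
      ((((hGxm j).sub hGxlm).norm).const_mul κ)
    filter_upwards [hmemIoc] with s h2
    have h3 : ‖G (x j s) - G (xlim s)‖ ≤ 2 * CG := by
      calc ‖G (x j s) - G (xlim s)‖ ≤ ‖G (x j s)‖ + ‖G (xlim s)‖ := norm_sub_le _ _
        _ ≤ 2 * CG := by
            have := hCG _ (hxmem j s (hsub h2))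
            have := hCG _ (hxlimmem s (hsub h2))
            linarith
    rw [Real.norm_eq_abs, abs_of_nonneg (by positivity)]
    exact mul_le_mul_of_nonneg_left h3 hκ
  have hb0' : Tendsto (fun j => ∫ s in Ioc (0:ℝ) t, κ * ‖G (x j s) - G (xlim s)‖) atTop
      (𝓝 (∫ (_ : ℝ) in Ioc (0:ℝ) t, (0:ℝ))) := by
    apply MeasureTheory.tendsto_integral_of_dominated_convergence (fun _ => κ * (2 * CG))
      (fun j => (((hGxm j).sub hGxlm).norm).const_mul κ) (integrable_const _)
    · intro j
      filter_upwards [hmemIoc] with s h2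
      have h3 : ‖G (x j s) - G (xlim s)‖ ≤ 2 * CG := by
        calc ‖G (x j s) - G (xlim s)‖ ≤ ‖G (x j s)‖ + ‖G (xlim s)‖ := norm_sub_le _ _
          _ ≤ 2 * CG := by
              have := hCG _ (hxmem j s (hsub h2))
              have := hCG _ (hxlimmem s (hsub h2))
              linarith
      rw [Real.norm_eq_abs, abs_of_nonneg (by positivity)]
      exact mul_le_mul_of_nonneg_left h3 hκ
    · filter_upwards [hmemIoc] with s h2
      have hsI : s ∈ Icc (0:ℝ) 1 := hsub h2
      have hx : Tendsto (fun j => x j s) atTop (𝓝 (xlim s)) := hxunif.tendsto_at hsI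
      have hGx : Tendsto (fun j => G (x j s)) atTop (𝓝 (G (xlim s))) :=
        (hG.tendsto _).comp hx
      have : Tendsto (fun j => κ * ‖G (x j s) - G (xlim s)‖) atTop
          (𝓝 (κ * ‖G (xlim s) - G (xlim s)‖)) :=
        ((hGx.sub tendsto_const_nhds).norm).const_mul κ
      simpa using this
  have hb0 : Tendsto (fun j => ∫ s in Ioc (0:ℝ) t, κ * ‖G (x j s) - G (xlim s)‖) atTop
      (𝓝 0) := by simpa using hb0'
  have L2 : Tendsto (fun j => ∫ s in Ioc (0:ℝ) t,
      (ξ j s • G (x j s) - ξ j s • G (xlim s))) atTop (𝓝 0) := by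
    apply squeeze_zero_norm _ hb0
    intro j
    apply MeasureTheory.norm_integral_le_of_norm_le (hIGd j)
    filter_upwards [hξbdd' j] with s h1
    rw [← smul_sub, norm_smul, Real.norm_eq_abs, abs_of_nonneg h1.1]
    exact mul_le_mul_of_nonneg_right h1.2 (norm_nonneg _)
  -- Limit L3 : weak* convergence against G (xlim ·) on Ioc 0 t
  have hbridge : ∀ (ζ : ℝ → ℝ) (g : ℝ → ℝ),
      (∫ s in Icc (0:ℝ) 1, ζ s * (Ioc (0:ℝ) t).indicator g s)
        = ∫ s in Ioc (0:ℝ) t, ζ s * g s := by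
    intro ζ g
    have hfe : (fun s => ζ s * (Ioc (0:ℝ) t).indicator g s)
        = (Ioc (0:ℝ) t).indicator (fun s => ζ s * g s) := by
      ext s; by_cases h : s ∈ Ioc (0:ℝ) t <;>
        simp [Set.indicator_of_mem, Set.indicator_of_notMem, h]
    calc (∫ s in Icc (0:ℝ) 1, ζ s * (Ioc (0:ℝ) t).indicator g s)
        = ∫ s, (Ioc (0:ℝ) t).indicator (fun s => ζ s * g s) s
            ∂(volume.restrict (Icc (0:ℝ) 1)) := by rw [hfe]
      _ = ∫ s, ζ s * g s ∂((volume.restrict (Icc (0:ℝ) 1)).restrict (Ioc (0:ℝ) t)) :=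
          MeasureTheory.integral_indicator measurableSet_Ioc
      _ = ∫ s in Ioc (0:ℝ) t, ζ s * g s := by
          rw [Measure.restrict_restrict measurableSet_Ioc, Set.inter_eq_left.mpr hsub]
  have hGcoordInt : ∀ i : Fin n, IntegrableOn
      ((Ioc (0:ℝ) t).indicator (fun s => G (xlim s) i)) (Icc (0:ℝ) 1) := by
    intro i
    have hc : ContinuousOn (fun s => G (xlim s) i) (Icc (0:ℝ) 1) :=
      ((EuclideanSpace.proj (𝕜 := ℝ) i).continuous.comp_continuousOn
        (hG.comp_continuousOn hxlimcont)).congr fun s _ => rfl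
    exact (hc.integrableOn_Icc).indicator measurableSet_Ioc
  have hproj : ∀ (ζ : ℝ → ℝ), Integrable (fun s => ζ s • G (xlim s))
      (volume.restrict (Ioc (0:ℝ) t)) → ∀ i : Fin n,
      (∫ s in Ioc (0:ℝ) t, ζ s * (G (xlim s) i))
        = (∫ s in Ioc (0:ℝ) t, ζ s • G (xlim s)) i := by
    intro ζ hζ i
    have := (EuclideanSpace.proj (𝕜 := ℝ) i).integral_comp_comm hζ
    have heq2 : (fun s => (EuclideanSpace.proj (𝕜 := ℝ) i) (ζ s • G (xlim s)))
        = fun s => ζ s * (G (xlim s) i) := by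
      ext s
      rfl
    rw [heq2] at this
    exact this
  have hcoord : ∀ i : Fin n, Tendsto
      (fun j => (∫ s in Ioc (0:ℝ) t, ξ j s • G (xlim s)) i) atTop
      (𝓝 ((∫ s in Ioc (0:ℝ) t, ξlim s • G (xlim s)) i)) := by
    intro i
    have hw := hweak _ (hGcoordInt i)
    rw [hbridge ξlim (fun s => G (xlim s) i), hproj ξlim hIgl i] at hw
    refine hw.congr fun j => ?_
    rw [hbridge (ξ j) (fun s => G (xlim s) i), hproj (ξ j) (hIh j) i]
  have L3 : Tendsto (fun j => ∫ s in Ioc (0:ℝ) t, ξ j s • G (xlim s)) atTop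
      (𝓝 (∫ s in Ioc (0:ℝ) t, ξlim s • G (xlim s))) := by
    have h1 : Tendsto (fun j => (EuclideanSpace.equiv (Fin n) ℝ)
        (∫ s in Ioc (0:ℝ) t, ξ j s • G (xlim s))) atTop
        (𝓝 ((EuclideanSpace.equiv (Fin n) ℝ)
          (∫ s in Ioc (0:ℝ) t, ξlim s • G (xlim s)))) := by
      rw [tendsto_pi_nhds]
      exact hcoord
    have h2 := ((EuclideanSpace.equiv (Fin n) ℝ).symm.continuous.tendsto _).comp h1
    simpa [Function.comp_def] using h2
  -- representation of x j t
  have hrepr : ∀ j, x j t = x j 0 + ((∫ s in Ioc (0:ℝ) t, f s (x j s) (u j s))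
      - ((∫ s in Ioc (0:ℝ) t, (ξ j s • G (x j s) - ξ j s • G (xlim s)))
        + ∫ s in Ioc (0:ℝ) t, ξ j s • G (xlim s))) := by
    intro j
    rw [heq j t ht, intervalIntegral.integral_of_le ht0]
    congr 1
    rw [MeasureTheory.integral_sub (hIF j) (hIg j)]
    congr 1
    have hd : Integrable (fun s => ξ j s • G (x j s) - ξ j s • G (xlim s))
        (volume.restrict (Ioc (0:ℝ) t)) := (hIg j).sub (hIh j)
    rw [← MeasureTheory.integral_add hd (hIh j)]
    congr 1
    funext s
    abel
  -- pass to the limit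
  have hXt : Tendsto (fun j => x j t) atTop (𝓝 (xlim t)) := hxunif.tendsto_at ht
  have hX0 : Tendsto (fun j => x j 0) atTop (𝓝 (xlim 0)) :=
    hxunif.tendsto_at ⟨le_refl _, zero_le_one⟩
  have hlimit : Tendsto (fun j => x j 0 + ((∫ s in Ioc (0:ℝ) t, f s (x j s) (u j s))
      - ((∫ s in Ioc (0:ℝ) t, (ξ j s • G (x j s) - ξ j s • G (xlim s)))
        + ∫ s in Ioc (0:ℝ) t, ξ j s • G (xlim s)))) atTop
      (𝓝 (xlim 0 + ((∫ s in Ioc (0:ℝ) t, f s (xlim s) (ulim s))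
        - ((0:EuclideanSpace ℝ (Fin n)) + ∫ s in Ioc (0:ℝ) t, ξlim s • G (xlim s))))) :=
    hX0.add (L1.sub (L2.add L3))
  have h2 := hlimit.congr fun j => (hrepr j).symm
  have hfinal := tendsto_nhds_unique hXt h2
  rw [hfinal, intervalIntegral.integral_of_le ht0,
    MeasureTheory.integral_sub hIFl hIgl, zero_add]
end

section
/- Consider the penalized optimal control problem (P_γ): minimize J(x,z,u) := g(x(0),x(1)) + ½(‖u(0)−ū(0)‖² + z(1) + ‖x(0)−x̄(0)‖²) over triples (x,z,u) with x∈W^{1,2}([0,1];ℝⁿ), z∈W^{1,1}([0,1];ℝ), u∈W^{1,2}([0,1];ℝᵐ) satisfying: ẋ(t)=f(t,x(t),u(t))−γe^{γψ(x(t))}∇ψ(x(t)) a.e.; ż(t)=‖u̇(t)−ū̇(t)‖² a.e. with z(0)=0; x(t)∈C∩B̄_δ(x̄(t)) and u(t)∈U(t)∩B̄_δ(ū(t)) for all t∈[0,1]; x(0)∈C₀′, x(1)∈C₁′; and z(1)∈[−δ,δ]. If there exists at least one admissible triple with J finite, then (P_γ) possesses a global optimal solution. -/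
open Real Set Metric MeasureTheory Filter intervalIntegral

noncomputable section


/-- A triple `(x,z,u)` is admissible for the penalized problem `(P_γ)`:
`x ∈ W^{1,2}` solves `ẋ = f(t,x,u) − γe^{γψ(x)}∇ψ(x)` a.e. (encoded via a derivative `x'`
and the integral representation); `u ∈ W^{1,2}` with derivative `u'`;
`ż = ‖u̇ − ū̇‖²` with `z(0) = 0`; the state constraints `x(t) ∈ C ∩ B̄_δ(x̄(t))` and
`u(t) ∈ U(t) ∩ B̄_δ(ū(t))` hold for all `t ∈ [0,1]`; the endpoint constraints
`x(0) ∈ C₀′`, `x(1) ∈ C₁′`, `z(1) ∈ [−δ,δ]` hold. -/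
def AdmissibleP {n m : ℕ} (γ δ : ℝ)
    (ψ : EuclideanSpace ℝ (Fin n) → ℝ)
    (gradψ : EuclideanSpace ℝ (Fin n) → EuclideanSpace ℝ (Fin n))
    (xbar : ℝ → EuclideanSpace ℝ (Fin n))
    (ubar ubar' : ℝ → EuclideanSpace ℝ (Fin m))
    (U : ℝ → Set (EuclideanSpace ℝ (Fin m)))
    (f : ℝ → EuclideanSpace ℝ (Fin n) → EuclideanSpace ℝ (Fin m) → EuclideanSpace ℝ (Fin n))
    (C₀' C₁' : Set (EuclideanSpace ℝ (Fin n)))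
    (x : ℝ → EuclideanSpace ℝ (Fin n)) (z : ℝ → ℝ) (u : ℝ → EuclideanSpace ℝ (Fin m)) :
    Prop :=
  ∃ (x' : ℝ → EuclideanSpace ℝ (Fin n)) (u' : ℝ → EuclideanSpace ℝ (Fin m)),
    IntervalIntegrable x' volume 0 1 ∧
    (∀ t ∈ Icc (0:ℝ) 1, x t = x 0 + ∫ s in (0:ℝ)..t, x' s) ∧
    (∀ᵐ t ∂(volume.restrict (Icc (0:ℝ) 1)),
      x' t = f t (x t) (u t) - (γ * Real.exp (γ * ψ (x t))) • gradψ (x t)) ∧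
    MemLp u' 2 (volume.restrict (Icc (0:ℝ) 1)) ∧
    (∀ t ∈ Icc (0:ℝ) 1, u t = u 0 + ∫ s in (0:ℝ)..t, u' s) ∧
    z 0 = 0 ∧
    (∀ t ∈ Icc (0:ℝ) 1, z t = ∫ s in (0:ℝ)..t, ‖u' s - ubar' s‖ ^ 2) ∧
    (∀ t ∈ Icc (0:ℝ) 1, ψ (x t) ≤ 0 ∧ x t ∈ closedBall (xbar t) δ) ∧
    (∀ t ∈ Icc (0:ℝ) 1, u t ∈ U t ∩ closedBall (ubar t) δ) ∧
    x 0 ∈ C₀' ∧ x 1 ∈ C₁' ∧ z 1 ∈ Icc (-δ) δ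

/-- The cost `J(x,z,u) = g(x(0),x(1)) + ½(‖u(0)−ū(0)‖² + z(1) + ‖x(0)−x̄(0)‖²)`
of the penalized problem, with values in `ℝ ∪ {±∞}`. -/
def Jcost {n m : ℕ} (g : EuclideanSpace ℝ (Fin n) → EuclideanSpace ℝ (Fin n) → EReal)
    (xbar : ℝ → EuclideanSpace ℝ (Fin n)) (ubar : ℝ → EuclideanSpace ℝ (Fin m))
    (x : ℝ → EuclideanSpace ℝ (Fin n)) (z : ℝ → ℝ) (u : ℝ → EuclideanSpace ℝ (Fin m)) :
    EReal :=
  g (x 0) (x 1) +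
    ((1 / 2 * (‖u 0 - ubar 0‖ ^ 2 + z 1 + ‖x 0 - xbar 0‖ ^ 2) : ℝ) : EReal)


section Aux
open Topology RealInnerProductSpace

/-- Lipschitz estimate for a function given by an integral representation with
a.e. bounded integrand. -/
lemma lip_of_rep {E : Type*} [NormedAddCommGroup E] [NormedSpace ℝ E]
    (x x' : ℝ → E) (L : ℝ) (hL : 0 ≤ L)
    (hint : IntervalIntegrable x' volume 0 1)
    (hrep : ∀ t ∈ Icc (0:ℝ) 1, x t = x 0 + ∫ s in (0:ℝ)..t, x' s)
    (hbd : ∀ᵐ t ∂(volume.restrict (Icc (0:ℝ) 1)), ‖x' t‖ ≤ L) :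
    ∀ s ∈ Icc (0:ℝ) 1, ∀ t ∈ Icc (0:ℝ) 1, ‖x t - x s‖ ≤ L * |t - s| := by
  have key : ∀ s ∈ Icc (0:ℝ) 1, ∀ t ∈ Icc (0:ℝ) 1, s ≤ t → ‖x t - x s‖ ≤ L * |t - s| := by
    intro s hs t ht hst
    have hsub1 : uIcc s t ⊆ uIcc (0:ℝ) 1 := by
      rw [uIcc_of_le hst, uIcc_of_le zero_le_one]
      exact Icc_subset_Icc hs.1 ht.2
    have hsub0 : uIcc (0:ℝ) s ⊆ uIcc (0:ℝ) 1 := by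
      rw [uIcc_of_le hs.1, uIcc_of_le zero_le_one]
      exact Icc_subset_Icc le_rfl hs.2
    have h1 : IntervalIntegrable x' volume s t := hint.mono_set hsub1
    have h0 : IntervalIntegrable x' volume 0 s := hint.mono_set hsub0
    have hxt := hrep t ht
    have hxs := hrep s hs
    have hadd : (∫ r in (0:ℝ)..s, x' r) + ∫ r in s..t, x' r = ∫ r in (0:ℝ)..t, x' r :=
      integral_add_adjacent_intervals h0 h1
    have hdiff : x t - x s = ∫ r in s..t, x' r := by
      rw [hxt, hxs, ← hadd]; abel
    rw [hdiff]
    have hae : ∀ᵐ r ∂(volume.restrict (Set.uIoc s t)), ‖x' r‖ ≤ L := by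
      refine ae_restrict_of_ae_restrict_of_subset ?_ hbd
      rw [uIoc_of_le hst]
      exact (Ioc_subset_Icc_self).trans (Icc_subset_Icc hs.1 ht.2)
    have := intervalIntegral.norm_integral_le_abs_of_norm_le hae
      (_root_.intervalIntegrable_const (c := L))
    rw [intervalIntegral.integral_const, smul_eq_mul] at this
    calc ‖∫ r in s..t, x' r‖ ≤ |(t - s) * L| := this
      _ = L * |t - s| := by rw [abs_mul, abs_of_nonneg hL, mul_comm]
  intro s hs t ht
  rcases le_total s t with h | h
  · exact key s hs t ht h
  · rw [← norm_neg, neg_sub, ← abs_neg, neg_sub]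
    exact key t ht s hs h


lemma weak_seq_compact {H : Type*} [NormedAddCommGroup H] [InnerProductSpace ℝ H]
    [CompleteSpace H] [TopologicalSpace.SeparableSpace H]
    (v : ℕ → H) (R : ℝ) (hR : ∀ k, ‖v k‖ ≤ R) :
    ∃ (w : H) (φ : ℕ → ℕ), StrictMono φ ∧
      ∀ y : H, Tendsto (fun k => ⟪v (φ k), y⟫) atTop (𝓝 ⟪w, y⟫) := by
  have hR0 : 0 ≤ R := le_trans (norm_nonneg _) (hR 0)
  haveI : Nonempty H := ⟨0⟩
  set e : ℕ → H := TopologicalSpace.denseSeq H with he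
  have hdense : DenseRange e := TopologicalSpace.denseRange_denseSeq H
  -- the sequence of inner products with the dense sequence lives in a compact product
  set s : Set (ℕ → ℝ) := Set.pi univ (fun i => Icc (-(R * ‖e i‖)) (R * ‖e i‖)) with hs
  have hscpt : IsCompact s := isCompact_univ_pi fun i => isCompact_Icc
  have hmem : ∀ k, (fun i => ⟪v k, e i⟫) ∈ s := by
    intro k i _
    have h1 : |⟪v k, e i⟫| ≤ ‖v k‖ * ‖e i‖ := abs_real_inner_le_norm _ _
    have h2 : ‖v k‖ * ‖e i‖ ≤ R * ‖e i‖ :=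
      mul_le_mul_of_nonneg_right (hR k) (norm_nonneg _)
    constructor
    · linarith [(abs_le.1 (h1.trans h2)).1]
    · linarith [(abs_le.1 (h1.trans h2)).2]
  obtain ⟨a, -, φ, hφ, ha⟩ := hscpt.tendsto_subseq hmem
  rw [tendsto_pi_nhds] at ha
  -- pointwise Cauchy on all of H
  have hcauchy : ∀ y : H, CauchySeq (fun k => ⟪v (φ k), y⟫) := by
    intro y
    rw [Metric.cauchySeq_iff]
    intro ε hε
    obtain ⟨i, hi⟩ : ∃ i, ‖e i - y‖ < ε / (3 * (R + 1)) := by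
      have : (ε / (3 * (R + 1))) > 0 := by positivity
      obtain ⟨i, hi0⟩ := hdense.exists_dist_lt y this
      refine ⟨i, ?_⟩
      rw [dist_comm, dist_eq_norm] at hi0
      exact hi0
    have hc : CauchySeq (fun k => ⟪v (φ k), e i⟫) := (ha i).cauchySeq
    rw [Metric.cauchySeq_iff] at hc
    obtain ⟨N, hN⟩ := hc (ε/3) (by positivity)
    refine ⟨N, fun j hj k hk => ?_⟩
    have hdiff : ∀ l : ℕ, |⟪v (φ l), y⟫ - ⟪v (φ l), e i⟫| ≤ R * ‖e i - y‖ := by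
      intro l
      have : ⟪v (φ l), y⟫ - ⟪v (φ l), e i⟫ = ⟪v (φ l), y - e i⟫ := by
        rw [inner_sub_right]
      rw [this]
      calc |⟪v (φ l), y - e i⟫| ≤ ‖v (φ l)‖ * ‖y - e i‖ := abs_real_inner_le_norm _ _
        _ ≤ R * ‖e i - y‖ := by
            rw [show ‖y - e i‖ = ‖e i - y‖ from norm_sub_rev _ _]
            exact mul_le_mul_of_nonneg_right (hR _) (norm_nonneg _)
    have hRb : R * ‖e i - y‖ < ε / 3 := by
      have h1 : R * ‖e i - y‖ ≤ R * (ε / (3 * (R + 1))) :=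
        mul_le_mul_of_nonneg_left hi.le hR0
      have h2 : R * (ε / (3 * (R + 1))) < ε / 3 := by
        set d := ε / (3 * (R + 1)) with hd
        have hdpos : 0 < d := by positivity
        have hh : d * (3 * (R + 1)) = ε := div_mul_cancel₀ _ (by positivity)
        nlinarith [hh, hdpos, hR0]
      linarith
    have := hN j hj k hk
    rw [Real.dist_eq] at this ⊢
    have h1 := hdiff j
    have h2 := hdiff k
    have : |⟪v (φ j), y⟫ - ⟪v (φ k), y⟫| ≤
        |⟪v (φ j), y⟫ - ⟪v (φ j), e i⟫| + |⟪v (φ j), e i⟫ - ⟪v (φ k), e i⟫|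
          + |⟪v (φ k), e i⟫ - ⟪v (φ k), y⟫| := by
      have := abs_sub_le (⟪v (φ j), y⟫) (⟪v (φ j), e i⟫) (⟪v (φ k), y⟫)
      have := abs_sub_le (⟪v (φ j), e i⟫) (⟪v (φ k), e i⟫) (⟪v (φ k), y⟫)
      linarith [abs_sub_le (⟪v (φ j), y⟫) (⟪v (φ j), e i⟫) (⟪v (φ k), y⟫),
        abs_sub_le (⟪v (φ j), e i⟫) (⟪v (φ k), e i⟫) (⟪v (φ k), y⟫)]
    have habs : |⟪v (φ k), e i⟫ - ⟪v (φ k), y⟫| = |⟪v (φ k), y⟫ - ⟪v (φ k), e i⟫| :=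
      abs_sub_comm _ _
    calc |⟪v (φ j), y⟫ - ⟪v (φ k), y⟫| ≤ _ := ‹|⟪v (φ j), y⟫ - ⟪v (φ k), y⟫| ≤ _›
      _ < ε := by rw [habs]; linarith [hN j hj k hk, hdiff j, hdiff k,
          (Real.dist_eq _ _ ▸ hN j hj k hk : |⟪v (φ j), e i⟫ - ⟪v (φ k), e i⟫| < ε/3)]
  -- pointwise limit functional
  have hlim : ∀ y : H, ∃ l : ℝ, Tendsto (fun k => ⟪v (φ k), y⟫) atTop (𝓝 l) :=
    fun y => cauchySeq_tendsto_of_complete (hcauchy y)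
  choose T hT using hlim
  have hTadd : ∀ y z, T (y + z) = T y + T z := by
    intro y z
    have h1 : Tendsto (fun k => ⟪v (φ k), y + z⟫) atTop (𝓝 (T y + T z)) := by
      have := (hT y).add (hT z)
      simpa [inner_add_right] using this
    exact tendsto_nhds_unique (hT (y + z)) h1
  have hTsmul : ∀ (c : ℝ) y, T (c • y) = c * T y := by
    intro c y
    have h1 : Tendsto (fun k => ⟪v (φ k), c • y⟫) atTop (𝓝 (c * T y)) := by
      have := (hT y).const_mul c
      simpa [inner_smul_right] using this
    exact tendsto_nhds_unique (hT (c • y)) h1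
  have hTbound : ∀ y, |T y| ≤ R * ‖y‖ := by
    intro y
    have : ∀ k, |⟪v (φ k), y⟫| ≤ R * ‖y‖ := fun k =>
      (abs_real_inner_le_norm _ _).trans (mul_le_mul_of_nonneg_right (hR _) (norm_nonneg _))
    exact le_of_tendsto ((hT y).abs) (Eventually.of_forall this)
  let Tl : H →ₗ[ℝ] ℝ :=
    { toFun := T, map_add' := hTadd, map_smul' := fun c y => by simpa using hTsmul c y }
  let L : H →L[ℝ] ℝ := LinearMap.mkContinuous Tl R (fun y => by
    simpa [Tl, Real.norm_eq_abs] using hTbound y)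
  refine ⟨(InnerProductSpace.toDual ℝ H).symm L, φ, hφ, fun y => ?_⟩
  have : ⟪(InnerProductSpace.toDual ℝ H).symm L, y⟫ = L y :=
    InnerProductSpace.toDual_symm_apply
  rw [this]
  exact hT y

lemma tendsto_of_inner_tendsto {F : Type*} [NormedAddCommGroup F] [InnerProductSpace ℝ F]
    [FiniteDimensional ℝ F] (y : ℕ → F) (y0 : F)
    (h : ∀ c : F, Tendsto (fun k => ⟪y k, c⟫) atTop (𝓝 ⟪y0, c⟫)) :
    Tendsto y atTop (𝓝 y0) := by
  set b := stdOrthonormalBasis ℝ F with hb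
  have h1 : Tendsto (fun k => ∑ i, ⟪y k, b i⟫ • b i) atTop
      (𝓝 (∑ i, ⟪y0, b i⟫ • b i)) := by
    refine tendsto_finset_sum _ (fun i _ => Tendsto.smul_const ?_ (b i))
    exact h (b i)
  have hrepr : ∀ w : F, ∑ i, ⟪w, b i⟫ • b i = w := by
    intro w
    rw [show ∑ i, ⟪w, b i⟫ • b i = ∑ i, ⟪b i, w⟫ • b i from
      Finset.sum_congr rfl (fun i _ => by rw [real_inner_comm])]
    exact b.sum_repr' w
  have h2 : (fun k => ∑ i, ⟪y k, b i⟫ • b i) = y := by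
    funext k; exact hrepr (y k)
  rw [h2, hrepr y0] at h1
  exact h1

set_option maxHeartbeats 2000000 in
set_option synthInstance.maxHeartbeats 400000 in
/-- Existence of a global optimal solution for the penalized problem
`(P_γ)`, provided some admissible triple has finite cost. -/
theorem stmt3 {n m : ℕ} (γ δ : ℝ) (hγ : 0 < γ) (hδ : 0 < δ)
    (ψ : EuclideanSpace ℝ (Fin n) → ℝ)
    (gradψ : EuclideanSpace ℝ (Fin n) → EuclideanSpace ℝ (Fin n))
    (hψ : ∀ y, HasGradientAt ψ (gradψ y) y) (hgradlip : LocallyLipschitz gradψ)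
    (hCcpt : IsCompact {y : EuclideanSpace ℝ (Fin n) | ψ y ≤ 0})
    (xbar : ℝ → EuclideanSpace ℝ (Fin n)) (hxbar : ContinuousOn xbar (Icc (0:ℝ) 1))
    (ubar ubar' : ℝ → EuclideanSpace ℝ (Fin m))
    (hubar' : MemLp ubar' 2 (volume.restrict (Icc (0:ℝ) 1)))
    (hubar : ∀ t ∈ Icc (0:ℝ) 1, ubar t = ubar 0 + ∫ s in (0:ℝ)..t, ubar' s)
    (U : ℝ → Set (EuclideanSpace ℝ (Fin m)))
    (hUne : ∀ t, (U t).Nonempty) (hUcl : ∀ t, IsClosed (U t))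
    (hUbdd : Bornology.IsBounded (⋃ t ∈ Icc (0:ℝ) 1, U t))
    (K' : Set (EuclideanSpace ℝ (Fin m))) (hK' : IsCompact K')
    (hK'sub : (⋃ t ∈ Icc (0:ℝ) 1, U t ∩ closedBall (ubar t) δ) ⊆ K')
    (f : ℝ → EuclideanSpace ℝ (Fin n) → EuclideanSpace ℝ (Fin m) → EuclideanSpace ℝ (Fin n))
    (hfmeas : ∀ y v, Measurable fun t => f t y v)
    (M : ℝ) (hM : 0 < M)
    (hf : ∀ᵐ t ∂(volume.restrict (Icc (0:ℝ) 1)),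
      ContinuousOn (fun p : EuclideanSpace ℝ (Fin n) × EuclideanSpace ℝ (Fin m) =>
        f t p.1 p.2) ({y | ψ y ≤ 0} ×ˢ K') ∧
      ∀ y, ψ y ≤ 0 → ∀ v ∈ K', ‖f t y v‖ ≤ M)
    (C₀' C₁' : Set (EuclideanSpace ℝ (Fin n)))
    (hC₀ : C₀'.Nonempty) (hC₀cl : IsClosed C₀')
    (hC₁ : C₁'.Nonempty) (hC₁cl : IsClosed C₁')
    (g : EuclideanSpace ℝ (Fin n) → EuclideanSpace ℝ (Fin n) → EReal)
    (hg : LowerSemicontinuous fun p :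
      EuclideanSpace ℝ (Fin n) × EuclideanSpace ℝ (Fin n) => g p.1 p.2)
    (hgbot : ∀ a b, g a b ≠ ⊥)
    (hgbdd : ∃ B : ℝ, ∀ a b : EuclideanSpace ℝ (Fin n), ψ a ≤ 0 → ψ b ≤ 0 →
      (B : EReal) ≤ g a b)
    (hfeas : ∃ x z u, AdmissibleP γ δ ψ gradψ xbar ubar ubar' U f C₀' C₁' x z u ∧
      Jcost g xbar ubar x z u < ⊤) :
    ∃ x z u, AdmissibleP γ δ ψ gradψ xbar ubar ubar' U f C₀' C₁' x z u ∧
      ∀ y w v, AdmissibleP γ δ ψ gradψ xbar ubar ubar' U f C₀' C₁' y w v →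
        Jcost g xbar ubar x z u ≤ Jcost g xbar ubar y w v := by
  classical
  haveI : Fact ((1:ENNReal) ≤ 2) := ⟨by norm_num⟩
  haveI : Fact ((2:ENNReal) ≠ ⊤) := ⟨by norm_num⟩
  set μ : Measure ℝ := volume.restrict (Icc (0:ℝ) 1) with hμdef
  set Cset : Set (EuclideanSpace ℝ (Fin n)) := {y | ψ y ≤ 0} with hCsetdef
  have hψc : Continuous ψ := by
    rw [continuous_iff_continuousAt]; intro y; exact (hψ y).continuousAt
  have hCclosed : IsClosed Cset := isClosed_le hψc continuous_const
  obtain ⟨B, hB⟩ := hgbdd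
  obtain ⟨G', hG'⟩ : ∃ G', ∀ y ∈ Cset, ‖gradψ y‖ ≤ G' := by
    rcases (hCcpt.image (continuous_norm.comp hgradlip.continuous)).bddAbove with ⟨G', hG'⟩
    exact ⟨G', fun y hy => hG' (mem_image_of_mem _ hy)⟩
  set G : ℝ := max G' 0 with hGdef
  have hGnn : 0 ≤ G := le_max_right _ _
  have hGbd : ∀ y ∈ Cset, ‖gradψ y‖ ≤ G := fun y hy => (hG' y hy).trans (le_max_left _ _)
  set L : ℝ := M + γ * G with hLdef
  have hL0 : 0 ≤ L := by positivity
  -- the set of admissible costs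
  set S : Set EReal := {c | ∃ x z u,
    AdmissibleP γ δ ψ gradψ xbar ubar ubar' U f C₀' C₁' x z u ∧
    Jcost g xbar ubar x z u = c} with hSdef
  -- lower bound for admissible costs
  have hSlb : ∀ c ∈ S, ((B - δ/2 : ℝ) : EReal) ≤ c := by
    rintro c ⟨x, z, u, hadm, rfl⟩
    obtain ⟨x', u', -, -, -, -, -, -, -, hxcon, -, -, -, hz1⟩ := hadm
    have hψ0 : ψ (x 0) ≤ 0 := (hxcon 0 (by norm_num)).1
    have hψ1 : ψ (x 1) ≤ 0 := (hxcon 1 (by norm_num)).1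
    have h1 : (B : EReal) ≤ g (x 0) (x 1) := hB _ _ hψ0 hψ1
    have h2 : (-(δ/2) : ℝ) ≤ 1/2 * (‖u 0 - ubar 0‖ ^ 2 + z 1 + ‖x 0 - xbar 0‖ ^ 2) := by
      have := hz1.1
      nlinarith [sq_nonneg ‖u 0 - ubar 0‖, sq_nonneg ‖x 0 - xbar 0‖]
    have hcoe : ((B - δ/2 : ℝ) : EReal) = (B : EReal) + ((-(δ/2) : ℝ) : EReal) := by
      rw [show (B - δ/2 : ℝ) = B + -(δ/2) by ring, EReal.coe_add]
    rw [hcoe]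
    exact add_le_add h1 (EReal.coe_le_coe_iff.2 h2)
  set I : EReal := sInf S with hIdef
  obtain ⟨xf, zf, uf, hadmf, hJf⟩ := hfeas
  have hStop : I ≠ ⊤ := by
    have h1 : I ≤ Jcost g xbar ubar xf zf uf := sInf_le ⟨xf, zf, uf, hadmf, rfl⟩
    exact ne_top_of_lt (lt_of_le_of_lt h1 hJf)
  have hSbot : I ≠ ⊥ := by
    have h1 : ((B - δ/2 : ℝ) : EReal) ≤ I := le_sInf hSlb
    intro h
    rw [h, le_bot_iff] at h1
    exact EReal.coe_ne_bot _ h1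
  set r0 : ℝ := I.toReal with hr0def
  have hIr : ((r0 : ℝ) : EReal) = I := EReal.coe_toReal hStop hSbot
  -- minimizing sequence
  have hmin : ∀ k : ℕ, ∃ x z u,
      AdmissibleP γ δ ψ gradψ xbar ubar ubar' U f C₀' C₁' x z u ∧
      Jcost g xbar ubar x z u < ((r0 + 1/(k+1) : ℝ) : EReal) := by
    intro k
    have hlt : I < ((r0 + 1/(k+1) : ℝ) : EReal) := by
      rw [← hIr]
      exact_mod_cast lt_add_of_pos_right r0 (by positivity : (0:ℝ) < 1/(k+1))
    rw [hIdef] at hlt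
    obtain ⟨c, hcS, hc⟩ := sInf_lt_iff.mp hlt
    obtain ⟨x, z, u, hadm, rfl⟩ := hcS
    exact ⟨x, z, u, hadm, hc⟩
  choose X Z Uu hadm hJlt using hmin
  choose X' U' hrest using hadm
  have hXint : ∀ k, IntervalIntegrable (X' k) volume 0 1 := fun k => (hrest k).1
  have hXrep : ∀ k, ∀ t ∈ Icc (0:ℝ) 1, X k t = X k 0 + ∫ s in (0:ℝ)..t, X' k s :=
    fun k => (hrest k).2.1
  have hXode : ∀ k, ∀ᵐ t ∂μ, X' k t =
      f t (X k t) (Uu k t) - (γ * Real.exp (γ * ψ (X k t))) • gradψ (X k t) :=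
    fun k => (hrest k).2.2.1
  have hUmem : ∀ k, MemLp (U' k) 2 μ := fun k => (hrest k).2.2.2.1
  have hUrep : ∀ k, ∀ t ∈ Icc (0:ℝ) 1, Uu k t = Uu k 0 + ∫ s in (0:ℝ)..t, U' k s :=
    fun k => (hrest k).2.2.2.2.1
  have hZrep : ∀ k, ∀ t ∈ Icc (0:ℝ) 1, Z k t = ∫ s in (0:ℝ)..t, ‖U' k s - ubar' s‖ ^ 2 :=
    fun k => (hrest k).2.2.2.2.2.2.1
  have hXcon : ∀ k, ∀ t ∈ Icc (0:ℝ) 1, ψ (X k t) ≤ 0 ∧ X k t ∈ closedBall (xbar t) δ :=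
    fun k => (hrest k).2.2.2.2.2.2.2.1
  have hUcon : ∀ k, ∀ t ∈ Icc (0:ℝ) 1, Uu k t ∈ U t ∩ closedBall (ubar t) δ :=
    fun k => (hrest k).2.2.2.2.2.2.2.2.1
  have hX0 : ∀ k, X k 0 ∈ C₀' := fun k => (hrest k).2.2.2.2.2.2.2.2.2.1
  have hX1 : ∀ k, X k 1 ∈ C₁' := fun k => (hrest k).2.2.2.2.2.2.2.2.2.2.1
  have hZ1 : ∀ k, Z k 1 ∈ Icc (-δ) δ := fun k => (hrest k).2.2.2.2.2.2.2.2.2.2.2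
  -- u-values lie in K'
  have hUK : ∀ k, ∀ t ∈ Icc (0:ℝ) 1, Uu k t ∈ K' := by
    intro k t ht
    exact hK'sub (mem_biUnion ht (hUcon k t ht))
  -- bound on derivatives of X
  have hX'bd : ∀ k, ∀ᵐ t ∂μ, ‖X' k t‖ ≤ L := by
    intro k
    filter_upwards [hXode k, hf, ae_restrict_mem measurableSet_Icc] with t hode hft ht
    rw [hode]
    have h1 : ψ (X k t) ≤ 0 := (hXcon k t ht).1
    have h2 : Uu k t ∈ K' := hUK k t ht
    have hfb : ‖f t (X k t) (Uu k t)‖ ≤ M := hft.2 _ h1 _ h2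
    have hexp : Real.exp (γ * ψ (X k t)) ≤ 1 :=
      Real.exp_le_one_iff.2 (mul_nonpos_iff.2 (Or.inl ⟨hγ.le, h1⟩))
    have hexp0 : 0 < Real.exp (γ * ψ (X k t)) := Real.exp_pos _
    have hgb : ‖gradψ (X k t)‖ ≤ G := hGbd _ h1
    have hsm : ‖(γ * Real.exp (γ * ψ (X k t))) • gradψ (X k t)‖ ≤ γ * G := by
      rw [norm_smul, Real.norm_eq_abs, abs_of_pos (by positivity)]
      have hstep : Real.exp (γ * ψ (X k t)) * ‖gradψ (X k t)‖ ≤ G := by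
        nlinarith [norm_nonneg (gradψ (X k t))]
      rw [mul_assoc]
      exact mul_le_mul_of_nonneg_left hstep hγ.le
    calc ‖f t (X k t) (Uu k t) - (γ * Real.exp (γ * ψ (X k t))) • gradψ (X k t)‖
        ≤ ‖f t (X k t) (Uu k t)‖ + ‖(γ * Real.exp (γ * ψ (X k t))) • gradψ (X k t)‖ :=
          norm_sub_le _ _
      _ ≤ M + γ * G := add_le_add hfb hsm
  -- Lipschitz estimates for X
  have hXlip : ∀ k, ∀ s ∈ Icc (0:ℝ) 1, ∀ t ∈ Icc (0:ℝ) 1,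
      ‖X k t - X k s‖ ≤ L * |t - s| := by
    intro k
    exact lip_of_rep (X k) (X' k) L hL0 (hXint k) (hXrep k) (hX'bd k)
  -- Z k 1 is the squared L² norm of U' k - ubar'
  have hZnn : ∀ k, 0 ≤ Z k 1 := by
    intro k
    rw [hZrep k 1 (by norm_num)]
    exact intervalIntegral.integral_nonneg zero_le_one (fun s _ => by positivity)
  -- L² elements
  set V : ℕ → Lp (EuclideanSpace ℝ (Fin m)) 2 μ :=
    fun k => ((hUmem k).sub hubar').toLp _ with hVdef
  have hμIoc : μ = volume.restrict (Ioc (0:ℝ) 1) := by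
    rw [hμdef, Measure.restrict_congr_set Ioc_ae_eq_Icc]
  have hVcoe : ∀ k, (V k : ℝ → EuclideanSpace ℝ (Fin m)) =ᵐ[μ]
      fun s => U' k s - ubar' s := fun k => MemLp.coeFn_toLp _
  have hVnorm : ∀ k, ‖V k‖ ^ 2 = Z k 1 := by
    intro k
    have h1 : ⟪V k, V k⟫ = ‖V k‖ ^ 2 := real_inner_self_eq_norm_sq _
    rw [← h1, L2.inner_def]
    have h2 : ∫ a, ⟪(V k : ℝ → EuclideanSpace ℝ (Fin m)) a,
        (V k : ℝ → EuclideanSpace ℝ (Fin m)) a⟫ ∂μ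
        = ∫ a, ‖U' k a - ubar' a‖ ^ 2 ∂μ := by
      refine integral_congr_ae ?_
      filter_upwards [hVcoe k] with a ha
      rw [ha, real_inner_self_eq_norm_sq]
    rw [h2, hZrep k 1 (by norm_num), intervalIntegral.integral_of_le zero_le_one, hμIoc]
  have hVbd : ∀ k, ‖V k‖ ≤ Real.sqrt δ := by
    intro k
    rw [show Real.sqrt δ = Real.sqrt δ from rfl]
    have h1 : ‖V k‖ ^ 2 ≤ δ := (hVnorm k) ▸ (hZ1 k).2
    have := Real.sqrt_le_sqrt h1
    rwa [Real.sqrt_sq (norm_nonneg _)] at this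
  -- X k as Lipschitz (hence bounded continuous) functions on [0,1]
  have hlipsub : ∀ k, LipschitzWith (Real.toNNReal L)
      (fun t : ↥(Icc (0:ℝ) 1) => X k t) := by
    intro k
    apply LipschitzWith.of_dist_le_mul
    intro a b
    rw [Subtype.dist_eq, Real.dist_eq, dist_eq_norm, Real.coe_toNNReal _ hL0]
    exact hXlip k b b.2 a a.2
  set bcf : ℕ → BoundedContinuousFunction (↥(Icc (0:ℝ) 1)) (EuclideanSpace ℝ (Fin n)) :=
    fun k => BoundedContinuousFunction.mkOfCompact ⟨_, (hlipsub k).continuous⟩ with hbcfdef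
  have hbcf_app : ∀ k (t : ↥(Icc (0:ℝ) 1)), bcf k t = X k t := fun k t => rfl
  have hAA : IsCompact (closure (Set.range bcf)) := by
    apply BoundedContinuousFunction.arzela_ascoli Cset hCcpt
    · rintro fc t ⟨k, rfl⟩
      exact (hXcon k t t.2).1
    · apply Metric.equicontinuous_of_continuity_modulus (fun r => L * r)
      · have : Continuous fun r : ℝ => L * r := continuous_const.mul continuous_id
        simpa using this.tendsto 0
      · rintro a b ⟨fc, ⟨k, rfl⟩⟩
        rw [hbcf_app, hbcf_app, Subtype.dist_eq, Real.dist_eq, dist_eq_norm]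
        exact hXlip k b b.2 a a.2
  obtain ⟨xb, hxbmem, φ1, hφ1, hconv1⟩ :=
    hAA.tendsto_subseq (fun k => subset_closure (mem_range_self k))
  have hxing : ∀ t : ↥(Icc (0:ℝ) 1),
      Tendsto (fun k => X (φ1 k) t) atTop (𝓝 (xb t)) := by
    intro t
    have heval : Continuous fun fc : BoundedContinuousFunction (↥(Icc (0:ℝ) 1))
        (EuclideanSpace ℝ (Fin n)) => fc t := by
      exact ContinuousEvalConst.continuous_eval_const t
    exact (heval.tendsto xb).comp hconv1
  -- extraction 2 : initial values of the controls
  obtain ⟨c0, hc0K, φ2, hφ2, hconv2⟩ :=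
    hK'.tendsto_subseq (x := fun k => Uu (φ1 k) 0)
      (fun k => hUK (φ1 k) 0 ⟨le_rfl, zero_le_one⟩)
  -- extraction 3 : weak limit of the derivatives of the controls
  obtain ⟨Vl, φ3, hφ3, hweak0⟩ :=
    weak_seq_compact (fun k => V (φ1 (φ2 k))) (Real.sqrt δ) (fun k => hVbd _)
  -- extraction 4 : limit of z at 1
  obtain ⟨Λ, hΛmem, φ4, hφ4, hconv4⟩ :=
    (isCompact_Icc (a := -δ) (b := δ)).tendsto_subseq
      (x := fun k => Z (φ1 (φ2 (φ3 k))) 1) (fun k => hZ1 _)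
  -- extraction 5 : limit of the endpoint costs in EReal
  obtain ⟨G0, -, φ5, hφ5, hconv5⟩ :=
    isCompact_univ.tendsto_subseq
      (x := fun k => g (X (φ1 (φ2 (φ3 (φ4 k)))) 0) (X (φ1 (φ2 (φ3 (φ4 k)))) 1))
      (fun k => mem_univ _)
  set ρ : ℕ → ℕ := fun k => φ1 (φ2 (φ3 (φ4 (φ5 k)))) with hρdef
  have hρmono : StrictMono ρ := hφ1.comp (hφ2.comp (hφ3.comp (hφ4.comp hφ5)))
  have hρle : ∀ k, k ≤ ρ k := fun k => hρmono.le_apply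
  -- convergences along ρ
  have hXconv : ∀ t : ↥(Icc (0:ℝ) 1),
      Tendsto (fun k => X (ρ k) t) atTop (𝓝 (xb t)) := fun t =>
    (hxing t).comp ((hφ2.comp (hφ3.comp (hφ4.comp hφ5))).tendsto_atTop)
  have hu0conv : Tendsto (fun k => Uu (ρ k) 0) atTop (𝓝 c0) :=
    hconv2.comp ((hφ3.comp (hφ4.comp hφ5)).tendsto_atTop)
  have hweak : ∀ y, Tendsto (fun k => ⟪V (ρ k), y⟫) atTop (𝓝 ⟪Vl, y⟫) := fun y =>
    (hweak0 y).comp ((hφ4.comp hφ5).tendsto_atTop)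
  have hzconv : Tendsto (fun k => Z (ρ k) 1) atTop (𝓝 Λ) :=
    hconv4.comp (hφ5.tendsto_atTop)
  have hgconv : Tendsto (fun k => g (X (ρ k) 0) (X (ρ k) 1)) atTop (𝓝 G0) := hconv5
  -- the measure μ is finite
  haveI hfinμ : IsFiniteMeasure μ := by
    constructor
    rw [hμdef, Measure.restrict_apply_univ]
    simp [Real.volume_Icc]
  -- limit objects
  set vl : ℝ → EuclideanSpace ℝ (Fin m) := (Vl : ℝ → EuclideanSpace ℝ (Fin m)) with hvldef
  have hvlmem : MemLp vl 2 μ := Lp.memLp Vl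
  set ul' : ℝ → EuclideanSpace ℝ (Fin m) := fun s => vl s + ubar' s with hul'def
  have hul'mem : MemLp ul' 2 μ := hvlmem.add hubar'
  set ul : ℝ → EuclideanSpace ℝ (Fin m) := fun t => c0 + ∫ s in (0:ℝ)..t, ul' s with huldef
  set zl : ℝ → ℝ := fun t => ∫ s in (0:ℝ)..t, ‖ul' s - ubar' s‖ ^ 2 with hzldef
  set xl : ℝ → EuclideanSpace ℝ (Fin n) := fun t => xb (projIcc 0 1 zero_le_one t) with hxldef
  have hxlIcc : ∀ t (ht : t ∈ Icc (0:ℝ) 1), xl t = xb ⟨t, ht⟩ := by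
    intro t ht
    show xb (projIcc 0 1 zero_le_one t) = xb ⟨t, ht⟩
    rw [projIcc_of_mem zero_le_one ht]
  -- interval integrability of MemLp functions
  have hii : ∀ (h : ℝ → EuclideanSpace ℝ (Fin m)), MemLp h 2 μ →
      ∀ t ∈ Icc (0:ℝ) 1, IntervalIntegrable h volume 0 t := by
    intro h hh t ht
    have h1 : Integrable h μ := hh.integrable (by norm_num)
    rw [hμdef] at h1
    rw [intervalIntegrable_iff]
    refine MeasureTheory.IntegrableOn.mono_set h1 ?_
    rw [uIoc_of_le ht.1]
    exact Ioc_subset_Icc_self.trans (Icc_subset_Icc le_rfl ht.2)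
  -- the key inner-product identity for indicator test functions
  have hIocne : ∀ t : ℝ, μ (Ioc (0:ℝ) t) ≠ ⊤ := fun t => measure_ne_top μ _
  have hkey : ∀ (W : Lp (EuclideanSpace ℝ (Fin m)) 2 μ) (t : ℝ) (ht : t ∈ Icc (0:ℝ) 1)
      (c : EuclideanSpace ℝ (Fin m)),
      ⟪W, indicatorConstLp 2 measurableSet_Ioc (hIocne t) c⟫ =
        ⟪∫ s in (0:ℝ)..t, (W : ℝ → EuclideanSpace ℝ (Fin m)) s, c⟫ := by
    intro W t ht c
    have hWi : IntervalIntegrable (W : ℝ → EuclideanSpace ℝ (Fin m)) volume 0 t :=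
      hii _ (Lp.memLp W) t ht
    rw [L2.inner_def]
    have h1 : ∫ a, ⟪(W : ℝ → EuclideanSpace ℝ (Fin m)) a,
        ((indicatorConstLp 2 measurableSet_Ioc (hIocne t) c : Lp (EuclideanSpace ℝ (Fin m)) 2 μ)
          : ℝ → EuclideanSpace ℝ (Fin m)) a⟫ ∂μ
        = ∫ a, (Ioc (0:ℝ) t).indicator
            (fun a => ⟪(W : ℝ → EuclideanSpace ℝ (Fin m)) a, c⟫) a ∂μ := by
      refine integral_congr_ae ?_
      filter_upwards [indicatorConstLp_coeFn (p := 2) (hs := measurableSet_Ioc)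
        (hμs := hIocne t) (c := c)] with a ha
      rw [ha]
      by_cases hmem : a ∈ Ioc (0:ℝ) t
      · rw [Set.indicator_of_mem hmem, Set.indicator_of_mem hmem]
      · rw [Set.indicator_of_notMem hmem, Set.indicator_of_notMem hmem, inner_zero_right]
    rw [h1, MeasureTheory.integral_indicator measurableSet_Ioc]
    have h2 : μ.restrict (Ioc (0:ℝ) t) = volume.restrict (Ioc (0:ℝ) t) := by
      rw [hμdef, Measure.restrict_restrict measurableSet_Ioc, inter_eq_left.2
        (Ioc_subset_Icc_self.trans (Icc_subset_Icc le_rfl ht.2))]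
    rw [h2, ← intervalIntegral.integral_of_le ht.1]
    have h3 : ∫ s in (0:ℝ)..t, ⟪(W : ℝ → EuclideanSpace ℝ (Fin m)) s, c⟫ =
        ∫ s in (0:ℝ)..t, ⟪c, (W : ℝ → EuclideanSpace ℝ (Fin m)) s⟫ := by
      refine intervalIntegral.integral_congr (fun s _ => ?_)
      rw [real_inner_comm]
    rw [h3, real_inner_comm, intervalIntegral.integral_of_le ht.1,
      intervalIntegral.integral_of_le ht.1]
    exact integral_inner hWi.1 c
  -- the coeFn of V j has the same interval integrals as U' j - ubar'
  have hVint : ∀ j, ∀ t ∈ Icc (0:ℝ) 1,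
      ∫ s in (0:ℝ)..t, (V j : ℝ → EuclideanSpace ℝ (Fin m)) s
        = ∫ s in (0:ℝ)..t, (U' j s - ubar' s) := by
    intro j t ht
    refine intervalIntegral.integral_congr_ae ?_
    have h1 : ∀ᵐ x ∂volume, x ∈ Icc (0:ℝ) 1 →
        (V j : ℝ → EuclideanSpace ℝ (Fin m)) x = U' j x - ubar' x := by
      rw [← ae_restrict_iff' measurableSet_Icc, ← hμdef]
      exact hVcoe j
    filter_upwards [h1] with x hx hxI
    refine hx ?_
    rw [uIoc_of_le ht.1] at hxI
    exact (Ioc_subset_Icc_self.trans (Icc_subset_Icc le_rfl ht.2)) hxI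
  -- weak convergence of integrals of the derivatives
  have hintconv : ∀ t, t ∈ Icc (0:ℝ) 1 →
      Tendsto (fun k => ∫ s in (0:ℝ)..t, (U' (ρ k) s - ubar' s)) atTop
        (𝓝 (∫ s in (0:ℝ)..t, vl s)) := by
    intro t ht
    apply tendsto_of_inner_tendsto
    intro c
    have h1 : ∀ j, ⟪∫ s in (0:ℝ)..t, (U' j s - ubar' s), c⟫ =
        ⟪V j, indicatorConstLp 2 measurableSet_Ioc (hIocne t) c⟫ := by
      intro j
      rw [hkey (V j) t ht c, hVint j t ht]
    have h2 : ⟪∫ s in (0:ℝ)..t, vl s, c⟫ =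
        ⟪Vl, indicatorConstLp 2 measurableSet_Ioc (hIocne t) c⟫ := by
      rw [hkey Vl t ht c]
    rw [h2]
    exact Tendsto.congr (fun k => (h1 (ρ k)).symm)
      (hweak (indicatorConstLp 2 measurableSet_Ioc (hIocne t) c))
  -- pointwise convergence of the controls
  have huconv : ∀ t, t ∈ Icc (0:ℝ) 1 → Tendsto (fun k => Uu (ρ k) t) atTop (𝓝 (ul t)) := by
    intro t ht
    have hsplit : ∀ j, Uu j t = Uu j 0 +
        ((∫ s in (0:ℝ)..t, (U' j s - ubar' s)) + ∫ s in (0:ℝ)..t, ubar' s) := by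
      intro j
      rw [hUrep j t ht]
      congr 1
      rw [intervalIntegral.integral_sub (hii _ (hUmem j) t ht) (hii _ hubar' t ht)]
      abel
    have hulsplit : ul t = c0 + ((∫ s in (0:ℝ)..t, vl s) + ∫ s in (0:ℝ)..t, ubar' s) := by
      show c0 + ∫ s in (0:ℝ)..t, ul' s = _
      congr 1
      rw [hul'def]
      exact intervalIntegral.integral_add (hii _ hvlmem t ht) (hii _ hubar' t ht)
    rw [hulsplit]
    exact Tendsto.congr (fun k => (hsplit (ρ k)).symm)
      (hu0conv.add ((hintconv t ht).add tendsto_const_nhds))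
  -- the limit control satisfies the constraints
  have hulcon : ∀ t ∈ Icc (0:ℝ) 1, ul t ∈ U t ∩ closedBall (ubar t) δ := by
    intro t ht
    have hcl : IsClosed (U t ∩ closedBall (ubar t) δ) := (hUcl t).inter Metric.isClosed_closedBall
    exact hcl.mem_of_tendsto (huconv t ht) (Eventually.of_forall fun k => hUcon (ρ k) t ht)
  have hulK : ∀ t ∈ Icc (0:ℝ) 1, ul t ∈ K' :=
    fun t ht => hK'sub (mem_biUnion ht (hulcon t ht))
  have hul0 : ul 0 = c0 := by
    show c0 + ∫ s in (0:ℝ)..(0:ℝ), ul' s = c0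
    rw [intervalIntegral.integral_same, add_zero]
  -- pointwise convergence of the states
  have hxlconv : ∀ t, ∀ ht : t ∈ Icc (0:ℝ) 1,
      Tendsto (fun k => X (ρ k) t) atTop (𝓝 (xl t)) := by
    intro t ht
    rw [hxlIcc t ht]
    exact hXconv ⟨t, ht⟩
  have hxlcon : ∀ t ∈ Icc (0:ℝ) 1, ψ (xl t) ≤ 0 ∧ xl t ∈ closedBall (xbar t) δ := by
    intro t ht
    have hcl : IsClosed (Cset ∩ closedBall (xbar t) δ) := hCclosed.inter Metric.isClosed_closedBall
    have hmem : xl t ∈ Cset ∩ closedBall (xbar t) δ :=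
      hcl.mem_of_tendsto (hxlconv t ht) (Eventually.of_forall fun k =>
        ⟨(hXcon (ρ k) t ht).1, (hXcon (ρ k) t ht).2⟩)
    exact ⟨hmem.1, hmem.2⟩
  -- the limit x-derivative
  set xl' : ℝ → EuclideanSpace ℝ (Fin n) := fun t =>
    if t ∈ Icc (0:ℝ) 1 then
      f t (xl t) (ul t) - (γ * Real.exp (γ * ψ (xl t))) • gradψ (xl t)
    else 0 with hxl'def
  have hxl'Icc : ∀ t ∈ Icc (0:ℝ) 1, xl' t =
      f t (xl t) (ul t) - (γ * Real.exp (γ * ψ (xl t))) • gradψ (xl t) := by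
    intro t ht
    show (if t ∈ Icc (0:ℝ) 1 then _ else _) = _
    rw [if_pos ht]
  -- a.e. convergence of the x-derivatives
  have hX'conv : ∀ᵐ t ∂μ, Tendsto (fun k => X' (ρ k) t) atTop (𝓝 (xl' t)) := by
    have hall : ∀ᵐ t ∂μ, ∀ k, X' (ρ k) t =
        f t (X (ρ k) t) (Uu (ρ k) t)
          - (γ * Real.exp (γ * ψ (X (ρ k) t))) • gradψ (X (ρ k) t) :=
      ae_all_iff.2 fun k => hXode (ρ k)
    filter_upwards [hall, hf, ae_restrict_mem measurableSet_Icc] with t hode hft ht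
    rw [hxl'Icc t ht]
    have hxu : Tendsto (fun k => (X (ρ k) t, Uu (ρ k) t)) atTop (𝓝 (xl t, ul t)) :=
      (hxlconv t ht).prodMk_nhds (huconv t ht)
    have hfcont : Tendsto (fun k => f t (X (ρ k) t) (Uu (ρ k) t)) atTop
        (𝓝 (f t (xl t) (ul t))) := by
      have hmemP : (xl t, ul t) ∈ Cset ×ˢ K' := ⟨(hxlcon t ht).1, hulK t ht⟩
      have hcwa := hft.1 _ hmemP
      have hwithin : Tendsto (fun k => (X (ρ k) t, Uu (ρ k) t)) atTop
          (𝓝[Cset ×ˢ K'] (xl t, ul t)) := by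
        rw [tendsto_nhdsWithin_iff]
        exact ⟨hxu, Eventually.of_forall fun k => ⟨(hXcon (ρ k) t ht).1, hUK (ρ k) t ht⟩⟩
      exact hcwa.tendsto.comp hwithin
    have hgcont : Tendsto (fun k => (γ * Real.exp (γ * ψ (X (ρ k) t))) • gradψ (X (ρ k) t))
        atTop (𝓝 ((γ * Real.exp (γ * ψ (xl t))) • gradψ (xl t))) := by
      have hc : Continuous fun y : EuclideanSpace ℝ (Fin n) =>
          (γ * Real.exp (γ * ψ y)) • gradψ y :=
        (continuous_const.mul (Real.continuous_exp.comp (continuous_const.mul hψc))).smul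
          hgradlip.continuous
      exact (hc.tendsto _).comp (hxlconv t ht)
    exact Tendsto.congr (fun k => (hode k).symm) (hfcont.sub hgcont)
  -- measurability of the derivatives
  have hX'meas : ∀ j, AEStronglyMeasurable (X' j) μ := by
    intro j
    have h2 := (hXint j).1.aestronglyMeasurable
    rw [hμIoc]
    exact h2
  have hxl'meas : AEStronglyMeasurable xl' μ :=
    aestronglyMeasurable_of_tendsto_ae atTop (fun k => hX'meas (ρ k)) hX'conv
  have hxl'bd : ∀ᵐ t ∂μ, ‖xl' t‖ ≤ L := by
    have hbd : ∀ᵐ t ∂μ, ∀ k, ‖X' (ρ k) t‖ ≤ L := ae_all_iff.2 fun k => hX'bd (ρ k)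
    filter_upwards [hbd, hX'conv] with t hb hcv
    exact le_of_tendsto hcv.norm (Eventually.of_forall hb)
  have hxl'intμ : Integrable xl' μ := Integrable.mono' (integrable_const L) hxl'meas hxl'bd
  have hxl'int : IntervalIntegrable xl' volume 0 1 := by
    rw [intervalIntegrable_iff, uIoc_of_le zero_le_one]
    show Integrable xl' (volume.restrict (Ioc (0:ℝ) 1))
    rwa [hμIoc] at hxl'intμ
  -- integral representation of the limit state
  have hxlrep : ∀ t ∈ Icc (0:ℝ) 1, xl t = xl 0 + ∫ s in (0:ℝ)..t, xl' s := by
    intro t ht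
    have h0 : (0:ℝ) ∈ Icc (0:ℝ) 1 := by norm_num
    have hsub : Ioc (0:ℝ) t ⊆ Icc 0 1 :=
      Ioc_subset_Icc_self.trans (Icc_subset_Icc le_rfl ht.2)
    have hres : volume.restrict (Ioc (0:ℝ) t) ≤ μ := by
      rw [hμdef]
      exact Measure.restrict_mono hsub le_rfl
    have hDCT : Tendsto (fun k => ∫ s in (0:ℝ)..t, X' (ρ k) s) atTop
        (𝓝 (∫ s in (0:ℝ)..t, xl' s)) := by
      rw [intervalIntegral.integral_of_le ht.1]
      refine Tendsto.congr (fun k => (intervalIntegral.integral_of_le ht.1).symm) ?_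
      refine tendsto_integral_of_dominated_convergence (fun _ => L)
        (fun k => (hX'meas (ρ k)).mono_measure hres) (integrable_const L)
        (fun k => ae_restrict_of_ae_restrict_of_subset hsub ?_)
        (ae_restrict_of_ae_restrict_of_subset hsub ?_)
      · have := hX'bd (ρ k); rwa [hμdef] at this
      · have := hX'conv; rwa [hμdef] at this
    have hother : Tendsto (fun k => X (ρ k) t) atTop
        (𝓝 (xl 0 + ∫ s in (0:ℝ)..t, xl' s)) :=
      Tendsto.congr (fun k => (hXrep (ρ k) t ht).symm) ((hxlconv 0 h0).add hDCT)
    exact tendsto_nhds_unique (hxlconv t ht) hother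
  have h0mem : (0:ℝ) ∈ Icc (0:ℝ) 1 := by norm_num
  have h1mem : (1:ℝ) ∈ Icc (0:ℝ) 1 := by norm_num
  -- the z-part of the limit
  have hzl0 : zl 0 = 0 := by
    show (∫ s in (0:ℝ)..(0:ℝ), ‖ul' s - ubar' s‖ ^ 2) = 0
    rw [intervalIntegral.integral_same]
  have hvl_eq : ∀ s, ul' s - ubar' s = vl s := by
    intro s
    show vl s + ubar' s - ubar' s = vl s
    abel
  have hzl1 : zl 1 = ‖Vl‖ ^ 2 := by
    calc zl 1 = ∫ s in (0:ℝ)..1, ‖vl s‖ ^ 2 := by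
          refine intervalIntegral.integral_congr (fun s _ => ?_)
          rw [hvl_eq]
      _ = ∫ s, ‖vl s‖ ^ 2 ∂μ := by
          rw [intervalIntegral.integral_of_le zero_le_one, ← hμIoc]
      _ = ⟪Vl, Vl⟫ := by
          rw [L2.inner_def]
          exact (integral_congr_ae (Eventually.of_forall fun a =>
            (real_inner_self_eq_norm_sq _))).symm
      _ = ‖Vl‖ ^ 2 := real_inner_self_eq_norm_sq _
  have hΛnn : 0 ≤ Λ :=
    le_of_tendsto_of_tendsto' tendsto_const_nhds hzconv (fun k => hZnn (ρ k))
  have hVlbd : ‖Vl‖ ^ 2 ≤ Λ := by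
    have h1 : Tendsto (fun k => ⟪V (ρ k), Vl⟫) atTop (𝓝 (‖Vl‖ ^ 2)) := by
      have := hweak Vl
      rwa [real_inner_self_eq_norm_sq] at this
    have h2 : ∀ k, ⟪V (ρ k), Vl⟫ ≤ Real.sqrt (Z (ρ k) 1) * ‖Vl‖ := by
      intro k
      have hnrm : ‖V (ρ k)‖ = Real.sqrt (Z (ρ k) 1) := by
        rw [← hVnorm (ρ k), Real.sqrt_sq (norm_nonneg _)]
      calc ⟪V (ρ k), Vl⟫ ≤ ‖V (ρ k)‖ * ‖Vl‖ := real_inner_le_norm _ _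
        _ = Real.sqrt (Z (ρ k) 1) * ‖Vl‖ := by rw [hnrm]
    have h3 : Tendsto (fun k => Real.sqrt (Z (ρ k) 1) * ‖Vl‖) atTop
        (𝓝 (Real.sqrt Λ * ‖Vl‖)) :=
      ((Real.continuous_sqrt.tendsto _).comp hzconv).mul_const _
    have h4 : ‖Vl‖ ^ 2 ≤ Real.sqrt Λ * ‖Vl‖ := le_of_tendsto_of_tendsto' h1 h3 h2
    rcases eq_or_lt_of_le (norm_nonneg Vl) with h | h
    · nlinarith
    · have h5 : ‖Vl‖ ≤ Real.sqrt Λ := by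
        refine le_of_mul_le_mul_right ?_ h
        nlinarith
      nlinarith [Real.sq_sqrt hΛnn, Real.sqrt_nonneg Λ]
  have hzl1Λ : zl 1 ≤ Λ := by rw [hzl1]; exact hVlbd
  have hzl1mem : zl 1 ∈ Icc (-δ) δ := by
    constructor
    · rw [hzl1]; nlinarith [sq_nonneg ‖Vl‖]
    · exact hzl1Λ.trans hΛmem.2
  -- assembling admissibility of the limit
  have hadml : AdmissibleP γ δ ψ gradψ xbar ubar ubar' U f C₀' C₁' xl zl ul := by
    refine ⟨xl', ul', hxl'int, hxlrep, ?_, hul'mem, ?_, hzl0, fun t ht => rfl, hxlcon,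
      hulcon, ?_, ?_, hzl1mem⟩
    · filter_upwards [ae_restrict_mem measurableSet_Icc] with t ht
      exact hxl'Icc t ht
    · intro t ht
      show c0 + ∫ s in (0:ℝ)..t, ul' s = ul 0 + ∫ s in (0:ℝ)..t, ul' s
      rw [hul0]
    · exact hC₀cl.mem_of_tendsto (hxlconv 0 h0mem) (Eventually.of_forall fun k => hX0 (ρ k))
    · exact hC₁cl.mem_of_tendsto (hxlconv 1 h1mem) (Eventually.of_forall fun k => hX1 (ρ k))
  -- optimality of the limit
  refine ⟨xl, zl, ul, hadml, ?_⟩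
  intro y w v hyadm
  have hIle : I ≤ Jcost g xbar ubar y w v := sInf_le ⟨y, w, v, hyadm, rfl⟩
  refine le_trans ?_ hIle
  set rinf : ℝ := 1/2 * (‖c0 - ubar 0‖ ^ 2 + Λ + ‖xl 0 - xbar 0‖ ^ 2) with hrinf
  have hrconv : Tendsto (fun k =>
      (1/2 * (‖Uu (ρ k) 0 - ubar 0‖ ^ 2 + Z (ρ k) 1 + ‖X (ρ k) 0 - xbar 0‖ ^ 2) : ℝ))
      atTop (𝓝 rinf) := by
    have ha : Tendsto (fun k => ‖Uu (ρ k) 0 - ubar 0‖ ^ 2) atTop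
        (𝓝 (‖c0 - ubar 0‖ ^ 2)) := ((hu0conv.sub tendsto_const_nhds).norm).pow 2
    have hb2 : Tendsto (fun k => ‖X (ρ k) 0 - xbar 0‖ ^ 2) atTop
        (𝓝 (‖xl 0 - xbar 0‖ ^ 2)) := (((hxlconv 0 h0mem).sub tendsto_const_nhds).norm).pow 2
    exact (((ha.add hzconv).add hb2)).const_mul (1/2 : ℝ)
  have hG0bot : G0 ≠ ⊥ := by
    have hle : (B : EReal) ≤ G0 :=
      ge_of_tendsto hgconv (Eventually.of_forall fun k =>
        hB _ _ (hXcon (ρ k) 0 h0mem).1 (hXcon (ρ k) 1 h1mem).1)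
    intro hcon
    rw [hcon, le_bot_iff] at hle
    exact EReal.coe_ne_bot _ hle
  have hJconv : Tendsto (fun k => Jcost g xbar ubar (X (ρ k)) (Z (ρ k)) (Uu (ρ k)))
      atTop (𝓝 (G0 + (rinf : EReal))) := by
    have h2 : Tendsto (fun k =>
        ((1/2 * (‖Uu (ρ k) 0 - ubar 0‖ ^ 2 + Z (ρ k) 1 + ‖X (ρ k) 0 - xbar 0‖ ^ 2) : ℝ) : EReal))
        atTop (𝓝 (rinf : EReal)) := EReal.tendsto_coe.2 hrconv
    have hcont := EReal.continuousAt_add (p := (G0, (rinf : EReal)))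
      (Or.inr (EReal.coe_ne_bot _)) (Or.inr (EReal.coe_ne_top _))
    exact hcont.tendsto.comp (hgconv.prodMk_nhds h2)
  have hJleI : G0 + (rinf : EReal) ≤ I := by
    have hupper : ∀ k, Jcost g xbar ubar (X (ρ k)) (Z (ρ k)) (Uu (ρ k)) ≤
        ((r0 + 1/(ρ k + 1) : ℝ) : EReal) := fun k => (hJlt (ρ k)).le
    have hrhs : Tendsto (fun k => ((r0 + 1/(ρ k + 1) : ℝ) : EReal)) atTop
        (𝓝 ((r0 : ℝ) : EReal)) := by
      rw [EReal.tendsto_coe]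
      have h1 : Tendsto (fun k : ℕ => (1/(k + 1) : ℝ)) atTop (𝓝 0) :=
        tendsto_one_div_add_atTop_nhds_zero_nat
      have h2 : Tendsto (fun k => (1/(ρ k + 1) : ℝ)) atTop (𝓝 0) :=
        h1.comp (hρmono.tendsto_atTop)
      have := h2.const_add r0
      simpa using this
    have := le_of_tendsto_of_tendsto hJconv hrhs (Eventually.of_forall hupper)
    rwa [hIr] at this
  have hglim : g (xl 0) (xl 1) ≤ G0 := by
    by_contra hlt
    push_neg at hlt
    obtain ⟨cmid, hc1, hc2⟩ := exists_between hlt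
    have hp : Tendsto (fun k => (X (ρ k) 0, X (ρ k) 1)) atTop (𝓝 (xl 0, xl 1)) :=
      (hxlconv 0 h0mem).prodMk_nhds (hxlconv 1 h1mem)
    have hev : ∀ᶠ k in atTop, cmid < g (X (ρ k) 0) (X (ρ k) 1) :=
      hp.eventually (hg (xl 0, xl 1) cmid hc2)
    have hle : cmid ≤ G0 := ge_of_tendsto hgconv (hev.mono fun k hk => hk.le)
    exact absurd hle (not_le.2 hc1)
  have hfinal : Jcost g xbar ubar xl zl ul ≤ G0 + (rinf : EReal) := by
    refine add_le_add hglim (EReal.coe_le_coe_iff.2 ?_)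
    rw [hul0, hrinf]
    nlinarith [hzl1Λ]
  exact hfinal.trans hJleI

end Aux
end
end

section
/- Let ψ:ℝⁿ→ℝ be continuously differentiable with ‖∇ψ(x)‖≥2η>0 for every x with ψ(x)=0, and set C:={x : ψ(x)≤0}. Let x:[0,1]→ℝⁿ be absolutely continuous with x(t)∈C for all t, and let h:[0,1]→ℝⁿ be measurable. Suppose ξ₁,ξ₂:[0,1]→[0,∞) are measurable functions that vanish a.e. on {t : ψ(x(t))<0} and satisfy, for i=1,2, ẋ(t)=h(t)−ξᵢ(t)∇ψ(x(t)) for a.e. t∈[0,1]. Then ξ₁(t)=ξ₂(t) for a.e. t∈[0,1], and for a.e. t with ψ(x(t))=0 one has ξᵢ(t)=‖ẋ(t)−h(t)‖/‖∇ψ(x(t))‖. -/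
open MeasureTheory Set Filter intervalIntegral

/-- Uniqueness and explicit formula for the sweeping multiplier: if
`x : [0,1] → ℝⁿ` is absolutely continuous with derivative `x'`, stays in `C = {ψ ≤ 0}`, and
`ξ₁, ξ₂ ≥ 0` vanish a.e. on `{ψ(x(t)) < 0}` and both satisfy
`ẋ(t) = h(t) − ξᵢ(t)∇ψ(x(t))` a.e., then `ξ₁ = ξ₂` a.e., and a.e. on `{ψ(x(t)) = 0}` one has
`ξᵢ(t) = ‖ẋ(t) − h(t)‖ / ‖∇ψ(x(t))‖`. Here `ψ` is `C¹` with `‖∇ψ‖ ≥ 2η > 0` on `{ψ = 0}`. -/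
theorem stmt5 {n : ℕ}
    (ψ : EuclideanSpace ℝ (Fin n) → ℝ)
    (gradψ : EuclideanSpace ℝ (Fin n) → EuclideanSpace ℝ (Fin n))
    (hψ : ∀ y, HasGradientAt ψ (gradψ y) y) (hgradcont : Continuous gradψ)
    (η : ℝ) (hη : 0 < η) (hnd : ∀ y, ψ y = 0 → 2 * η ≤ ‖gradψ y‖)
    (x x' : ℝ → EuclideanSpace ℝ (Fin n))
    (hx'int : IntervalIntegrable x' volume 0 1)
    (hxAC : ∀ t ∈ Icc (0:ℝ) 1, x t = x 0 + ∫ s in (0:ℝ)..t, x' s)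
    (hxC : ∀ t ∈ Icc (0:ℝ) 1, ψ (x t) ≤ 0)
    (h : ℝ → EuclideanSpace ℝ (Fin n)) (hhmeas : Measurable h)
    (ξ₁ ξ₂ : ℝ → ℝ) (hξ₁meas : Measurable ξ₁) (hξ₂meas : Measurable ξ₂)
    (hξ₁pos : ∀ᵐ t ∂(volume.restrict (Icc (0:ℝ) 1)), 0 ≤ ξ₁ t)
    (hξ₂pos : ∀ᵐ t ∂(volume.restrict (Icc (0:ℝ) 1)), 0 ≤ ξ₂ t)
    (hξ₁van : ∀ᵐ t ∂(volume.restrict (Icc (0:ℝ) 1)), ψ (x t) < 0 → ξ₁ t = 0)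
    (hξ₂van : ∀ᵐ t ∂(volume.restrict (Icc (0:ℝ) 1)), ψ (x t) < 0 → ξ₂ t = 0)
    (heq₁ : ∀ᵐ t ∂(volume.restrict (Icc (0:ℝ) 1)), x' t = h t - ξ₁ t • gradψ (x t))
    (heq₂ : ∀ᵐ t ∂(volume.restrict (Icc (0:ℝ) 1)), x' t = h t - ξ₂ t • gradψ (x t)) :
    (∀ᵐ t ∂(volume.restrict (Icc (0:ℝ) 1)), ξ₁ t = ξ₂ t) ∧
    (∀ᵐ t ∂(volume.restrict (Icc (0:ℝ) 1)), ψ (x t) = 0 →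
      ξ₁ t = ‖x' t - h t‖ / ‖gradψ (x t)‖ ∧ ξ₂ t = ‖x' t - h t‖ / ‖gradψ (x t)‖) := by
  have hmem := ae_restrict_mem (μ := volume) (measurableSet_Icc : MeasurableSet (Icc (0:ℝ) 1))
  have key : ∀ᵐ t ∂(volume.restrict (Icc (0:ℝ) 1)),
      ξ₁ t = ξ₂ t ∧ (ψ (x t) = 0 →
        ξ₁ t = ‖x' t - h t‖ / ‖gradψ (x t)‖ ∧ ξ₂ t = ‖x' t - h t‖ / ‖gradψ (x t)‖) := by
    filter_upwards [hξ₁pos, hξ₂pos, hξ₁van, hξ₂van, heq₁, heq₂, hmem] with t p1 p2 v1 v2 e1 e2 ht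
    have hle : ψ (x t) ≤ 0 := hxC t ht
    by_cases hz : ψ (x t) = 0
    · have hgpos : (0:ℝ) < ‖gradψ (x t)‖ := by linarith [hnd (x t) hz]
      have hg : ‖gradψ (x t)‖ ≠ 0 := hgpos.ne' 
      have hgv : gradψ (x t) ≠ 0 := fun h0 => hg (by simp [h0])
      have heqs : ξ₁ t • gradψ (x t) = ξ₂ t • gradψ (x t) :=
        sub_right_injective (e1.symm.trans e2)
      have h12 : ξ₁ t = ξ₂ t := smul_left_injective ℝ hgv heqs
      have hnorm : ‖x' t - h t‖ = ξ₁ t * ‖gradψ (x t)‖ := by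
        rw [e1]
        have : h t - ξ₁ t • gradψ (x t) - h t = -(ξ₁ t • gradψ (x t)) := by abel
        rw [this, norm_neg, norm_smul, Real.norm_eq_abs, abs_of_nonneg p1]
      have hξ : ξ₁ t = ‖x' t - h t‖ / ‖gradψ (x t)‖ := by
        rw [hnorm]; field_simp
      exact ⟨h12, fun _ => ⟨hξ, h12 ▸ hξ⟩⟩
    · have hlt : ψ (x t) < 0 := lt_of_le_of_ne hle hz
      exact ⟨(v1 hlt).trans (v2 hlt).symm, fun h0 => absurd h0 hz⟩
  exact ⟨key.mono fun t h => h.1, key.mono fun t h => h.2⟩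
end
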